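/- arXiv:math/0606016 — 5 statements merged into one kernel-verified Lean document; each statement's English description precedes it below -/
import Mathlib

section
/- If the entries of an n×n Toeplitz matrix T_n = (a_{j-k})_{j,k=0}^{n-1} satisfy |a_{±m}| = O(m^{-1}) as m → ∞, then ‖T_n‖ = O(log n) as n → ∞. -/
open MeasureTheory Filter Asymptotics Real Set

noncomputable def specNorm {n : ℕ} (M : Matrix (Fin n) (Fin n) ℂ) : ℝ :=
  ‖Matrix.toEuclideanCLM (𝕜 := ℂ) (n := Fin n) M‖

noncomputable def toeplitz (a : ℤ → ℂ) (n : ℕ) : Matrix (Fin n) (Fin n) ℂ :=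
  Matrix.of fun j k => a ((j : ℤ) - (k : ℤ))

noncomputable abbrev μ01 : Measure ℝ := volume.restrict (Set.Ioo 0 1)

noncomputable abbrev L2I := Lp ℂ 2 μ01

def IsIntegralOp (k : ℝ → ℝ → ℂ) (K : L2I →L[ℂ] L2I) : Prop :=
  ∀ f : L2I, ∀ᵐ x ∂μ01, (K f : ℝ → ℂ) x = ∫ y in Set.Ioo (0:ℝ) 1, k x y * (f : ℝ → ℂ) y

noncomputable def fc (a : ℝ → ℂ) (k : ℤ) : ℂ :=
  (1 / (2 * π)) * ∫ θ in (-π)..π, a θ * Complex.exp (-Complex.I * k * θ)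

/-- Schur-type bound: the spectral norm is at most any common bound on row and column
absolute sums. -/
lemma schur_bound {n : ℕ} (M : Matrix (Fin n) (Fin n) ℂ) (R : ℝ) (hR : 0 ≤ R)
    (hrow : ∀ j, ∑ k, ‖M j k‖ ≤ R) (hcol : ∀ k, ∑ j, ‖M j k‖ ≤ R) :
    specNorm M ≤ R := by
  rw [specNorm]
  apply ContinuousLinearMap.opNorm_le_bound _ hR
  intro x
  have hy : ∀ j, (Matrix.toEuclideanCLM (𝕜 := ℂ) (n := Fin n) M x) j
      = M.mulVec (fun k => x k) j := by
    intro j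
    have := Matrix.ofLp_toEuclideanCLM (𝕜 := ℂ) M x
    exact congrFun this j
  have key : ∑ j, ‖(Matrix.toEuclideanCLM (𝕜 := ℂ) (n := Fin n) M x) j‖ ^ 2
      ≤ (R * ‖x‖) ^ 2 := by
    have step1 : ∀ j : Fin n, ‖(Matrix.toEuclideanCLM (𝕜 := ℂ) (n := Fin n) M x) j‖ ^ 2
        ≤ R * ∑ k, ‖M j k‖ * ‖x k‖ ^ 2 := by
      intro j
      rw [hy j]
      have h1 : ‖M.mulVec (fun k => x k) j‖ ≤ ∑ k, ‖M j k‖ * ‖x k‖ := by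
        simp only [Matrix.mulVec, dotProduct]
        refine (norm_sum_le _ _).trans ?_
        simp [norm_mul]
      have h2 : (∑ k, ‖M j k‖ * ‖x k‖) ^ 2
          ≤ (∑ k, ‖M j k‖) * ∑ k, ‖M j k‖ * ‖x k‖ ^ 2 := by
        have := Finset.sum_mul_sq_le_sq_mul_sq Finset.univ
          (fun k => Real.sqrt ‖M j k‖) (fun k => Real.sqrt ‖M j k‖ * ‖x k‖)
        calc (∑ k, ‖M j k‖ * ‖x k‖) ^ 2
            = (∑ k, Real.sqrt ‖M j k‖ * (Real.sqrt ‖M j k‖ * ‖x k‖)) ^ 2 := by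
              congr 1; apply Finset.sum_congr rfl; intro k _
              rw [← mul_assoc, Real.mul_self_sqrt (norm_nonneg _)]
          _ ≤ (∑ k, Real.sqrt ‖M j k‖ ^ 2) * ∑ k, (Real.sqrt ‖M j k‖ * ‖x k‖) ^ 2 := this
          _ = (∑ k, ‖M j k‖) * ∑ k, ‖M j k‖ * ‖x k‖ ^ 2 := by
              congr 1
              · apply Finset.sum_congr rfl; intro k _; exact Real.sq_sqrt (norm_nonneg _)
              · apply Finset.sum_congr rfl; intro k _
                rw [mul_pow, Real.sq_sqrt (norm_nonneg _)]
      calc ‖M.mulVec (fun k => x k) j‖ ^ 2 ≤ (∑ k, ‖M j k‖ * ‖x k‖) ^ 2 := by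
            apply pow_le_pow_left₀ (norm_nonneg _) h1
        _ ≤ (∑ k, ‖M j k‖) * ∑ k, ‖M j k‖ * ‖x k‖ ^ 2 := h2
        _ ≤ R * ∑ k, ‖M j k‖ * ‖x k‖ ^ 2 := by
            apply mul_le_mul_of_nonneg_right (hrow j)
            positivity
    calc ∑ j, ‖(Matrix.toEuclideanCLM (𝕜 := ℂ) (n := Fin n) M x) j‖ ^ 2
        ≤ ∑ j, R * ∑ k, ‖M j k‖ * ‖x k‖ ^ 2 := Finset.sum_le_sum (fun j _ => step1 j)
      _ = R * ∑ k, (∑ j, ‖M j k‖) * ‖x k‖ ^ 2 := by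
          rw [← Finset.mul_sum, Finset.sum_comm]
          congr 1; apply Finset.sum_congr rfl; intro k _
          rw [Finset.sum_mul]
      _ ≤ R * ∑ k, R * ‖x k‖ ^ 2 := by
          apply mul_le_mul_of_nonneg_left _ hR
          apply Finset.sum_le_sum; intro k _
          exact mul_le_mul_of_nonneg_right (hcol k) (sq_nonneg _)
      _ = (R * ‖x‖) ^ 2 := by
          rw [← Finset.mul_sum, mul_pow, EuclideanSpace.norm_eq,
            Real.sq_sqrt (by positivity)]
          ring
  rw [EuclideanSpace.norm_eq]
  calc Real.sqrt (∑ j, ‖(Matrix.toEuclideanCLM (𝕜 := ℂ) (n := Fin n) M x) j‖ ^ 2)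
      ≤ Real.sqrt ((R * ‖x‖) ^ 2) := Real.sqrt_le_sqrt key
    _ = R * ‖x‖ := Real.sqrt_sq (by positivity)

lemma sum_insert_le' {f : ℤ → ℝ} (hf : ∀ m, 0 ≤ f m) (a : ℤ) (s : Finset ℤ) :
    ∑ m ∈ insert a s, f m ≤ f a + ∑ m ∈ s, f m := by
  by_cases h : a ∈ s
  · rw [Finset.insert_eq_self.mpr h]
    nlinarith [hf a]
  · rw [Finset.sum_insert h]

lemma ioo_sum_le {f : ℤ → ℝ} (hf : ∀ m, 0 ≤ f m) (n : ℕ) :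
    ∑ m ∈ Finset.Ioo (-(n : ℤ)) n, f m ≤ ∑ m ∈ Finset.range n, (f m + f (-(m : ℤ))) := by
  induction n with
  | zero => simp
  | succ n ih =>
    have hset : Finset.Ioo (-((n+1 : ℕ) : ℤ)) ((n+1 : ℕ) : ℤ)
        = insert ((n : ℕ) : ℤ) (insert (-((n : ℕ) : ℤ)) (Finset.Ioo (-(n : ℤ)) n)) := by
      ext m
      simp only [Finset.mem_Ioo, Finset.mem_insert]
      push_cast
      omega
    rw [hset, Finset.sum_range_succ]
    calc ∑ m ∈ insert ((n : ℕ) : ℤ) (insert (-((n : ℕ) : ℤ)) (Finset.Ioo (-(n : ℤ)) n)), f m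
        ≤ f n + ∑ m ∈ insert (-((n : ℕ) : ℤ)) (Finset.Ioo (-(n : ℤ)) n), f m :=
          sum_insert_le' hf _ _
      _ ≤ f n + (f (-(n : ℤ)) + ∑ m ∈ Finset.Ioo (-(n : ℤ)) n, f m) := by
          gcongr; exact sum_insert_le' hf _ _
      _ ≤ f n + (f (-(n : ℤ)) + ∑ m ∈ Finset.range n, (f m + f (-(m : ℤ)))) := by
          gcongr
      _ = ∑ m ∈ Finset.range n, (f m + f (-(m : ℤ))) + (f n + f (-(n : ℤ))) := by ring

lemma inj_sum_le (a : ℤ → ℂ) (n : ℕ) (b : Fin n → ℤ) (hb : Function.Injective b)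
    (hmem : ∀ k, b k ∈ Finset.Ioo (-(n : ℤ)) (n : ℤ)) :
    ∑ k, ‖a (b k)‖ ≤ ∑ m ∈ Finset.range n, (‖a m‖ + ‖a (-(m : ℤ))‖) := by
  have h1 : ∑ k, ‖a (b k)‖ = ∑ m ∈ Finset.univ.image b, ‖a m‖ :=
    (Finset.sum_image (f := fun m => ‖a m‖) (fun x _ y _ h => hb h)).symm
  rw [h1]
  refine le_trans (Finset.sum_le_sum_of_subset_of_nonneg ?_ (fun _ _ _ => norm_nonneg _))
    (ioo_sum_le (fun m => norm_nonneg (a m)) n)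
  intro m hmmem
  obtain ⟨k, _, rfl⟩ := Finset.mem_image.mp hmmem
  exact hmem k

theorem stmt1 (a : ℤ → ℂ)
    (hp : (fun m : ℕ => ‖a (m : ℤ)‖) =O[atTop] fun m : ℕ => (m : ℝ) ^ (-1 : ℝ))
    (hm : (fun m : ℕ => ‖a (-(m : ℤ))‖) =O[atTop] fun m : ℕ => (m : ℝ) ^ (-1 : ℝ)) :
    (fun n : ℕ => specNorm (toeplitz a n)) =O[atTop] fun n : ℕ => Real.log n := by
  -- notation for the bounding sums
  set g : ℕ → ℝ := fun m => ‖a (m : ℤ)‖ + ‖a (-(m : ℤ))‖ with hg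
  have hg0 : ∀ m, 0 ≤ g m := fun m => add_nonneg (norm_nonneg _) (norm_nonneg _)
  -- extract constants from the big-O hypotheses
  rw [isBigO_iff] at hp hm
  obtain ⟨C1, hC1⟩ := hp
  obtain ⟨C2, hC2⟩ := hm
  rw [eventually_atTop] at hC1 hC2
  obtain ⟨N1, hN1⟩ := hC1
  obtain ⟨N2, hN2⟩ := hC2
  set C : ℝ := |C1| + |C2| with hCdef
  have hC0 : 0 ≤ C := add_nonneg (abs_nonneg _) (abs_nonneg _)
  set N : ℕ := max (max N1 N2) 1 with hNdef
  have hN1' : N1 ≤ N := le_trans (le_max_left _ _) (le_max_left _ _)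
  have hN2' : N2 ≤ N := le_trans (le_max_right _ _) (le_max_left _ _)
  have hN1le : 1 ≤ N := le_max_right _ _
  -- pointwise tail bound
  have key : ∀ m : ℕ, N ≤ m → g m ≤ C * (m : ℝ)⁻¹ := by
    intro m hmN
    have hm1 : 1 ≤ m := le_trans hN1le hmN
    have hnorm : ‖(m : ℝ) ^ (-1 : ℝ)‖ = (m : ℝ)⁻¹ := by
      rw [Real.rpow_neg_one, Real.norm_eq_abs, abs_of_nonneg (by positivity)]
    have h1 := hN1 m (le_trans hN1' hmN)
    have h2 := hN2 m (le_trans hN2' hmN)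
    rw [Real.norm_eq_abs, abs_of_nonneg (norm_nonneg _), hnorm] at h1 h2
    have b1 : ‖a (m : ℤ)‖ ≤ |C1| * (m : ℝ)⁻¹ := by
      refine h1.trans ?_
      exact mul_le_mul_of_nonneg_right (le_abs_self _) (by positivity)
    have b2 : ‖a (-(m : ℤ))‖ ≤ |C2| * (m : ℝ)⁻¹ := by
      refine h2.trans ?_
      exact mul_le_mul_of_nonneg_right (le_abs_self _) (by positivity)
    calc g m ≤ |C1| * (m : ℝ)⁻¹ + |C2| * (m : ℝ)⁻¹ := add_le_add b1 b2
      _ = C * (m : ℝ)⁻¹ := by rw [hCdef]; ring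
  set B : ℝ := ∑ m ∈ Finset.range N, g m with hBdef
  have hB0 : 0 ≤ B := Finset.sum_nonneg fun m _ => hg0 m
  -- the partial sums are bounded by B + C * (1 + log n)
  have sum_bound : ∀ n : ℕ, N ≤ n →
      ∑ m ∈ Finset.range n, g m ≤ B + C * (1 + Real.log n) := by
    intro n hn
    have hsplit : ∑ m ∈ Finset.range n, g m
        = B + ∑ m ∈ Finset.Ico N n, g m := by
      rw [hBdef, Finset.range_eq_Ico, Finset.range_eq_Ico]
      exact (Finset.sum_Ico_consecutive g (Nat.zero_le N) hn).symm
    rw [hsplit]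
    have htail : ∑ m ∈ Finset.Ico N n, g m ≤ C * ∑ m ∈ Finset.Ico N n, (m : ℝ)⁻¹ := by
      rw [Finset.mul_sum]
      exact Finset.sum_le_sum fun m hmmem => key m (Finset.mem_Ico.mp hmmem).1
    have hharm : ∑ m ∈ Finset.Ico N n, (m : ℝ)⁻¹ ≤ (harmonic n : ℝ) := by
      have hh : (harmonic n : ℝ) = ∑ i ∈ Finset.Icc 1 n, (i : ℝ)⁻¹ := by
        rw [harmonic_eq_sum_Icc]
        push_cast
        rfl
      rw [hh]
      refine Finset.sum_le_sum_of_subset_of_nonneg ?_ (fun i _ _ => by positivity)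
      intro m hmmem
      rw [Finset.mem_Ico] at hmmem
      rw [Finset.mem_Icc]
      exact ⟨le_trans hN1le hmmem.1, le_of_lt hmmem.2⟩
    have hlog : (harmonic n : ℝ) ≤ 1 + Real.log n := harmonic_le_one_add_log n
    have hfin : ∑ m ∈ Finset.Ico N n, g m ≤ C * (1 + Real.log n) :=
      htail.trans (mul_le_mul_of_nonneg_left (hharm.trans hlog) hC0)
    linarith
  -- the spectral norm is bounded by the partial sum
  have spec_le : ∀ n : ℕ, specNorm (toeplitz a n) ≤ ∑ m ∈ Finset.range n, g m := by
    intro n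
    apply schur_bound _ _ (Finset.sum_nonneg fun m _ => hg0 m)
    · intro j
      have h := inj_sum_le a n (fun k => (j : ℤ) - (k : ℤ))
        (fun k k' hkk => by
          have hb : (j : ℤ) - (k : ℤ) = (j : ℤ) - (k' : ℤ) := hkk
          have hzz : (k : ℤ) = (k' : ℤ) := by omega
          exact Fin.ext (by exact_mod_cast hzz))
        (fun k => by
          simp only [Finset.mem_Ioo]
          have hj := j.isLt
          have hk := k.isLt
          omega)
      simpa [toeplitz] using h
    · intro k
      have h := inj_sum_le a n (fun j => (j : ℤ) - (k : ℤ))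
        (fun j j' hjj => by
          have hb : (j : ℤ) - (k : ℤ) = (j' : ℤ) - (k : ℤ) := hjj
          have hzz : (j : ℤ) = (j' : ℤ) := by omega
          exact Fin.ext (by exact_mod_cast hzz))
        (fun j => by
          simp only [Finset.mem_Ioo]
          have hj := j.isLt
          have hk := k.isLt
          omega)
      simpa [toeplitz] using h
  -- conclude
  rw [isBigO_iff]
  refine ⟨B + 2 * C, ?_⟩
  filter_upwards [eventually_ge_atTop N, eventually_ge_atTop 3] with n hnN hn3
  have hn3' : (3 : ℝ) ≤ (n : ℝ) := by exact_mod_cast hn3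
  have hnpos : (0 : ℝ) < (n : ℝ) := by linarith
  have hlog1 : 1 ≤ Real.log n := by
    rw [Real.le_log_iff_exp_le hnpos]
    calc Real.exp 1 ≤ 2.7182818286 := Real.exp_one_lt_d9.le
      _ ≤ (n : ℝ) := by linarith
  have hspec0 : 0 ≤ specNorm (toeplitz a n) := by
    rw [specNorm]; exact norm_nonneg _
  rw [Real.norm_eq_abs, abs_of_nonneg hspec0, Real.norm_eq_abs,
    abs_of_nonneg (by linarith : (0:ℝ) ≤ Real.log n)]
  have h1 : specNorm (toeplitz a n) ≤ B + C * (1 + Real.log n) :=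
    (spec_le n).trans (sum_bound n hnN)
  nlinarith [hlog1, hB0, hC0]
end

section
/- If the entries of an n×n Toeplitz matrix satisfy |a_{±m}| = o(m^γ) as m → ∞ for some real γ > -1, then ‖T_n‖ = o(n^{γ+1}) as n → ∞. -/
open MeasureTheory Filter Asymptotics Real Set

/-!
Schur's test bounds the spectral norm of a matrix by the geometric mean of its largest row and
column `ℓ¹`-sums. Every row and column of `T_n` consists of distinct entries among
`a_{-(n-1)}, …, a_{n-1}`, so `‖T_n‖ ≤ ∑_{m<n} (|a_m| + |a_{-m}|)`. Since `γ > -1`, the series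
`∑ m^γ` diverges with partial sums `O(n^{γ+1})` (compare with `∫₀ⁿ x^γ dx`), and summing
`|a_{±m}| = o(m^γ)` gives `o(n^{γ+1})`.
-/

theorem Finset.sum_comp_le_sum_of_injOn {ι κ M : Type*} [AddCommMonoid M] [PartialOrder M]
    [IsOrderedAddMonoid M] {s : Finset ι} {t : Finset κ} {f : κ → M} (e : ι → κ)
    (he : Set.InjOn e s) (hest : Set.MapsTo e s t) (hf : ∀ j ∈ t, 0 ≤ f j) :
    ∑ i ∈ s, f (e i) ≤ ∑ j ∈ t, f j := by
  classical
  rw [← sum_image he]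
  exact sum_le_sum_of_subset_of_nonneg (image_subset_iff.2 hest) fun j hj _ => hf j hj

theorem sum_Ioo_neg_le_sum_range {f : ℤ → ℝ} (hf : 0 ≤ f) (n : ℕ) :
    ∑ d ∈ Finset.Ioo (-(n : ℤ)) n, f d ≤ ∑ m ∈ Finset.range n, (f m + f (-m)) := by
  set s₁ := (Finset.range n).image (fun m : ℕ => (m : ℤ))
  set s₂ := (Finset.range n).image (fun m : ℕ => -(m : ℤ))
  have hsub : Finset.Ioo (-(n : ℤ)) n ⊆ s₁ ∪ s₂ := by
    intro d hd
    rw [Finset.mem_Ioo] at hd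
    rcases le_or_gt 0 d with h | h
    · exact Finset.mem_union_left _
        (Finset.mem_image.2 ⟨d.toNat, Finset.mem_range.2 (by omega), by omega⟩)
    · exact Finset.mem_union_right _
        (Finset.mem_image.2 ⟨(-d).toNat, Finset.mem_range.2 (by omega), by omega⟩)
  calc ∑ d ∈ Finset.Ioo (-(n : ℤ)) n, f d ≤ ∑ d ∈ s₁ ∪ s₂, f d :=
        Finset.sum_le_sum_of_subset_of_nonneg hsub fun d _ _ => hf d
    _ ≤ ∑ d ∈ s₁, f d + ∑ d ∈ s₂, f d := by
        rw [← Finset.sum_union_inter]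
        exact le_add_of_nonneg_right (Finset.sum_nonneg fun d _ => hf d)
    _ = ∑ m ∈ Finset.range n, (f m + f (-m)) := by
        rw [Finset.sum_image (by simp), Finset.sum_image (by simp), Finset.sum_add_distrib]

namespace Matrix

theorem sum_norm_mulVec_sq_le {𝕜 m n : Type*} [RCLike 𝕜] [Fintype m] [Fintype n]
    (A : Matrix m n 𝕜) {R C : ℝ} (hR : 0 ≤ R) (hrow : ∀ i, ∑ j, ‖A i j‖ ≤ R)
    (hcol : ∀ j, ∑ i, ‖A i j‖ ≤ C) (x : n → 𝕜) :
    ∑ i, ‖(A *ᵥ x) i‖ ^ 2 ≤ R * C * ∑ j, ‖x j‖ ^ 2 := by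
  have hrow_sq : ∀ i, ‖(A *ᵥ x) i‖ ^ 2 ≤ R * ∑ j, ‖A i j‖ * ‖x j‖ ^ 2 := fun i => calc
    ‖(A *ᵥ x) i‖ ^ 2 ≤ (∑ j, ‖A i j‖ * ‖x j‖) ^ 2 := by
        gcongr
        exact (norm_sum_le _ _).trans_eq (by simp only [norm_mul])
    _ ≤ (∑ j, ‖A i j‖) * ∑ j, ‖A i j‖ * ‖x j‖ ^ 2 :=
        Finset.sum_sq_le_sum_mul_sum_of_sq_le_mul _ (fun _ _ => norm_nonneg _)
          (fun _ _ => by positivity) fun _ _ => le_of_eq (by ring)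
    _ ≤ R * ∑ j, ‖A i j‖ * ‖x j‖ ^ 2 := by gcongr; exact hrow i
  calc ∑ i, ‖(A *ᵥ x) i‖ ^ 2 ≤ ∑ i, R * ∑ j, ‖A i j‖ * ‖x j‖ ^ 2 :=
        Finset.sum_le_sum fun i _ => hrow_sq i
    _ = R * ∑ j, (∑ i, ‖A i j‖) * ‖x j‖ ^ 2 := by
        simp only [← Finset.mul_sum, Finset.sum_mul]
        rw [Finset.sum_comm]
    _ ≤ R * ∑ j, C * ‖x j‖ ^ 2 := by gcongr with j; exact hcol j
    _ = R * C * ∑ j, ‖x j‖ ^ 2 := by rw [← Finset.mul_sum, mul_assoc]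

open scoped Norms.L2Operator in
theorem l2_opNorm_le_sqrt_mul {𝕜 m n : Type*} [RCLike 𝕜] [Fintype m] [Fintype n]
    [DecidableEq n] (A : Matrix m n 𝕜) {R C : ℝ} (hR : 0 ≤ R) (hrow : ∀ i, ∑ j, ‖A i j‖ ≤ R)
    (hcol : ∀ j, ∑ i, ‖A i j‖ ≤ C) :
    ‖A‖ ≤ √(R * C) := by
  rw [l2_opNorm_def]
  refine ContinuousLinearMap.opNorm_le_bound _ (sqrt_nonneg _) fun x => ?_
  rw [EuclideanSpace.norm_eq, EuclideanSpace.norm_eq, ← sqrt_mul' _ (by positivity)]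
  exact sqrt_le_sqrt (A.sum_norm_mulVec_sq_le hR hrow hcol x)

end Matrix

theorem specNorm_le_of_sum_norm_le {n : ℕ} (M : Matrix (Fin n) (Fin n) ℂ) {C : ℝ} (hC : 0 ≤ C)
    (hrow : ∀ i, ∑ j, ‖M i j‖ ≤ C) (hcol : ∀ j, ∑ i, ‖M i j‖ ≤ C) : specNorm M ≤ C := by
  have := M.l2_opNorm_le_sqrt_mul hC hrow hcol
  rwa [sqrt_mul_self hC] at this

theorem sum_range_succ_rpow_le_integral {γ : ℝ} (hγ : -1 < γ) (hγ₀ : γ ≤ 0) (n : ℕ) :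
    ∑ i ∈ Finset.range n, ((i + 1 : ℕ) : ℝ) ^ γ ≤ ∫ x in (0 : ℝ)..n, x ^ γ := by
  have hint : ∀ k < n, IntervalIntegrable (fun x : ℝ => x ^ γ) volume k ((k + 1 : ℕ) : ℝ) :=
    fun k _ => intervalIntegral.intervalIntegrable_rpow' hγ
  rw [← Nat.cast_zero, ← intervalIntegral.sum_integral_adjacent_intervals hint]
  refine Finset.sum_le_sum fun k _ => ?_
  calc ((k + 1 : ℕ) : ℝ) ^ γ = ∫ _ in (k : ℝ)..((k + 1 : ℕ) : ℝ), ((k + 1 : ℕ) : ℝ) ^ γ := by simp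
    _ ≤ ∫ x in (k : ℝ)..((k + 1 : ℕ) : ℝ), x ^ γ := by
        -- not `AntitoneOn.sum_le_integral`: `x ^ γ` fails to be antitone at `0 ^ γ = 0`
        refine intervalIntegral.integral_mono_on_of_le_Ioo (by simp) (by simp)
          (intervalIntegral.intervalIntegrable_rpow' hγ) fun x hx => ?_
        exact rpow_le_rpow_of_nonpos ((Nat.cast_nonneg k).trans_lt hx.1) hx.2.le hγ₀

theorem sum_range_rpow_le {γ : ℝ} (hγ : -1 < γ) (n : ℕ) :
    ∑ i ∈ Finset.range n, (i : ℝ) ^ γ ≤ (n : ℝ) ^ (γ + 1) / (γ + 1) := by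
  have hintegral : ∫ x in (0 : ℝ)..n, x ^ γ = (n : ℝ) ^ (γ + 1) / (γ + 1) := by
    rw [integral_rpow (Or.inl hγ), zero_rpow (by linarith), sub_zero]
  rw [← hintegral]
  rcases le_or_gt 0 γ with hγ₀ | hγ₀
  · have hmono : MonotoneOn (fun x : ℝ => x ^ γ) (Icc 0 (0 + n)) :=
      fun x hx y _ hxy => rpow_le_rpow hx.1 hxy hγ₀
    simpa using hmono.sum_le_integral
  · cases n with
    | zero => simp
    | succ k =>
      calc ∑ i ∈ Finset.range (k + 1), (i : ℝ) ^ γ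
            = ∑ i ∈ Finset.range k, ((i + 1 : ℕ) : ℝ) ^ γ := by
            rw [Finset.sum_range_succ', Nat.cast_zero, zero_rpow hγ₀.ne, add_zero]
        _ ≤ ∑ i ∈ Finset.range (k + 1), ((i + 1 : ℕ) : ℝ) ^ γ :=
            Finset.sum_le_sum_of_subset_of_nonneg (Finset.range_subset_range.2 k.le_succ)
              fun _ _ _ => by positivity
        _ ≤ _ := sum_range_succ_rpow_le_integral hγ hγ₀.le (k + 1)

theorem isLittleO_sum_range_of_isLittleO_rpow {E : Type*} [NormedAddCommGroup E] {f : ℕ → E}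
    {γ : ℝ} (hγ : -1 < γ) (hf : f =o[atTop] fun m : ℕ => (m : ℝ) ^ γ) :
    (fun n => ∑ m ∈ Finset.range n, f m) =o[atTop] fun n : ℕ => (n : ℝ) ^ (γ + 1) := by
  have hnonneg : ∀ m : ℕ, 0 ≤ (m : ℝ) ^ γ := fun m => rpow_nonneg m.cast_nonneg γ
  have hdiverge : Tendsto (fun n => ∑ m ∈ Finset.range n, (m : ℝ) ^ γ) atTop atTop :=
    (not_summable_iff_tendsto_nat_atTop_of_nonneg hnonneg).1 (by rw [summable_nat_rpow]; linarith)
  have hbigO : (fun n => ∑ m ∈ Finset.range n, (m : ℝ) ^ γ) =O[atTop]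
      fun n : ℕ => (n : ℝ) ^ (γ + 1) := by
    refine IsBigO.of_bound (1 / (γ + 1)) (Eventually.of_forall fun n => ?_)
    rw [norm_of_nonneg (Finset.sum_nonneg fun m _ => hnonneg m),
      norm_of_nonneg (rpow_nonneg n.cast_nonneg _), one_div_mul_eq_div]
    exact sum_range_rpow_le hγ n
  exact (hf.sum_range hnonneg hdiverge).trans_isBigO hbigO

theorem sum_norm_toeplitz_row_le (a : ℤ → ℂ) (n : ℕ) (j : Fin n) :
    ∑ k, ‖toeplitz a n j k‖ ≤ ∑ d ∈ Finset.Ioo (-(n : ℤ)) n, ‖a d‖ :=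
  Finset.sum_comp_le_sum_of_injOn (fun k : Fin n => (j : ℤ) - k)
    (fun k _ l _ h => Fin.ext (by simpa using h))
    (fun k _ => by simp only [Finset.coe_Ioo, Set.mem_Ioo]; omega) fun _ _ => norm_nonneg _

theorem sum_norm_toeplitz_col_le (a : ℤ → ℂ) (n : ℕ) (k : Fin n) :
    ∑ j, ‖toeplitz a n j k‖ ≤ ∑ d ∈ Finset.Ioo (-(n : ℤ)) n, ‖a d‖ :=
  Finset.sum_comp_le_sum_of_injOn (fun j : Fin n => (j : ℤ) - k)
    (fun j _ l _ h => Fin.ext (by simpa using h))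
    (fun j _ => by simp only [Finset.coe_Ioo, Set.mem_Ioo]; omega) fun _ _ => norm_nonneg _

theorem specNorm_toeplitz_le (a : ℤ → ℂ) (n : ℕ) :
    specNorm (toeplitz a n) ≤ ∑ m ∈ Finset.range n, (‖a m‖ + ‖a (-m)‖) := by
  have hdiag := sum_Ioo_neg_le_sum_range (f := fun d => ‖a d‖) (fun _ => norm_nonneg _) n
  exact specNorm_le_of_sum_norm_le _ (Finset.sum_nonneg fun _ _ => by positivity)
    (fun j => (sum_norm_toeplitz_row_le a n j).trans hdiag)
    (fun k => (sum_norm_toeplitz_col_le a n k).trans hdiag)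

theorem stmt2 (a : ℤ → ℂ) (γ : ℝ) (hγ : γ > -1)
    (hp : (fun m : ℕ => ‖a (m : ℤ)‖) =o[atTop] fun m : ℕ => (m : ℝ) ^ γ)
    (hm : (fun m : ℕ => ‖a (-(m : ℤ))‖) =o[atTop] fun m : ℕ => (m : ℝ) ^ γ) :
    (fun n : ℕ => specNorm (toeplitz a n)) =o[atTop] fun n : ℕ => (n : ℝ) ^ (γ + 1) := by
  refine IsBigO.trans_isLittleO ?_ (isLittleO_sum_range_of_isLittleO_rpow hγ (hp.add hm))
  refine IsBigO.of_bound 1 (Eventually.of_forall fun n => ?_)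
  have hnonneg : 0 ≤ specNorm (toeplitz a n) := norm_nonneg _
  rw [one_mul, norm_of_nonneg hnonneg]
  exact (specNorm_toeplitz_le a n).trans (le_norm_self _)
end

section
/- For a Toeplitz matrix whose sequence {a_k} is the sequence of Fourier coefficients of a continuous function a on the unit circle, the spectral norm ‖T_n(a)‖ converges to ‖a‖_∞ as n → ∞. In particular, if |a_{±m}| = O(m^γ) with γ < -1, then ‖T_n‖ converges to a finite limit. -/
open MeasureTheory Filter Asymptotics Real Set

noncomputable section
namespace TP

abbrev T2 : ℝ := 2 * π
instance : Fact (0 < T2) := ⟨by positivity⟩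

open AddCircle

lemma cont_integrable {g : AddCircle T2 → ℂ} (hg : Continuous g) :
    Integrable g haarAddCircle :=
  hg.integrable_of_hasCompactSupport ((isClosed_tsupport g).isCompact)

lemma lift_continuous {a : ℝ → ℂ} (ha : Continuous a) (hper : Function.Periodic a T2) :
    Continuous hper.lift := by
  rw [continuous_coinduced_dom]
  exact ha

lemma fourierCoeff_sum {ι : Type*} (s : Finset ι) (g : ι → AddCircle T2 → ℂ)
    (hg : ∀ i, Continuous (g i)) (n : ℤ) :
    fourierCoeff (fun t => ∑ i ∈ s, g i t) n = ∑ i ∈ s, fourierCoeff (g i) n := by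
  unfold fourierCoeff
  rw [← integral_finset_sum]
  · congr 1; ext t; rw [Finset.smul_sum]
  · exact fun i _ => cont_integrable ((fourier (-n)).continuous.smul (hg i))

lemma fourierCoeff_fourier_mul (s : ℤ) (g : AddCircle T2 → ℂ) (j : ℤ) :
    fourierCoeff (fun t => fourier s t * g t) j = fourierCoeff g (j - s) := by
  unfold fourierCoeff
  congr 1; ext t
  rw [smul_eq_mul, smul_eq_mul, ← mul_assoc]
  congr 1
  rw [← fourier_add]
  congr 1; ring

lemma fc_eq_fourierCoeff {a : ℝ → ℂ} (ha : Continuous a) (hper : Function.Periodic a T2)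
    (m : ℤ) : fc a m = fourierCoeff hper.lift m := by
  rw [fourierCoeff_eq_intervalIntegral _ m (-π)]
  have h1 : -π + T2 = π := by simp [T2]; ring
  rw [h1, fc, Complex.real_smul]
  congr 1
  · push_cast
    norm_num
  apply intervalIntegral.integral_congr
  intro x _
  simp only []
  rw [Function.Periodic.lift_coe, fourier_coe_apply, smul_eq_mul, mul_comm]
  congr 1
  have : (2 * ↑π : ℂ) ≠ 0 := by
    simp [Complex.ofReal_ne_zero, Real.pi_ne_zero]
  congr 1
  push_cast
  field_simp

end TP
namespace TP
open AddCircle ContinuousMap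

abbrev HM : Measure (AddCircle T2) := haarAddCircle

lemma cont_integrable' {E : Type*} [NormedAddCommGroup E] {g : AddCircle T2 → E}
    (hg : Continuous g) : Integrable g HM :=
  hg.integrable_of_hasCompactSupport ((isClosed_tsupport g).isCompact)

def I2 (g : AddCircle T2 → ℂ) : ℝ := ∫ t, ‖g t‖ ^ 2 ∂HM

lemma I2_nonneg (g : AddCircle T2 → ℂ) : 0 ≤ I2 g :=
  integral_nonneg fun t => by positivity

lemma I2_mono {g h : AddCircle T2 → ℂ} (hg : Continuous g) (hh : Continuous h)
    (hle : ∀ t, ‖g t‖ ≤ ‖h t‖) : I2 g ≤ I2 h := by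
  refine integral_mono (cont_integrable' (by continuity)) (cont_integrable' (by continuity)) ?_
  intro t
  exact pow_le_pow_left₀ (norm_nonneg _) (hle t) 2

lemma lp_normSq (f : Lp ℂ 2 HM) : ‖f‖ ^ 2 = ∫ t, ‖f t‖ ^ 2 ∂HM := by
  have H₃ := congr_arg RCLike.re (@L2.inner_def (AddCircle T2) ℂ ℂ _ _ _ _ _ f f)
  rw [← integral_re (L2.integrable_inner f f)] at H₃
  simp only [← @norm_sq_eq_re_inner ℂ] at H₃
  exact H₃

lemma parseval_cont {g : AddCircle T2 → ℂ} (hg : Continuous g) :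
    (∑' i : ℤ, ‖fourierCoeff g i‖ ^ 2 = I2 g) ∧
      Summable (fun i : ℤ => ‖fourierCoeff g i‖ ^ 2) := by
  set G : C(AddCircle T2, ℂ) := ⟨g, hg⟩
  set F := ContinuousMap.toLp (E := ℂ) 2 HM ℂ G with hF
  have hcoeff : ∀ i, fourierCoeff (F : AddCircle T2 → ℂ) i = fourierCoeff g i := by
    intro i; rw [hF, fourierCoeff_toLp]; rfl
  constructor
  · have := tsum_sq_fourierCoeff F
    simp_rw [hcoeff] at this
    rw [this, I2]
    apply integral_congr_ae
    filter_upwards [ContinuousMap.coeFn_toLp (p := 2) HM (𝕜 := ℂ) G] with t ht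
    rw [ht]; rfl
  · have hmem := lp.memℓp (fourierBasis.repr F)
    have hs := hmem.summable (p := 2) (by norm_num)
    refine hs.congr fun i => ?_
    rw [fourierBasis_repr, hcoeff]
    norm_num

lemma bessel {g : AddCircle T2 → ℂ} (hg : Continuous g) (s : Finset ℤ) :
    ∑ i ∈ s, ‖fourierCoeff g i‖ ^ 2 ≤ I2 g := by
  obtain ⟨hp, hs⟩ := parseval_cont hg
  rw [← hp]
  exact Summable.sum_le_tsum s (fun i _ => by positivity) hs

lemma fourierCoeff_fourier (k j : ℤ) :
    fourierCoeff (⇑(fourier k) : AddCircle T2 → ℂ) j = if j = k then 1 else 0 := by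
  have h1 : fourierCoeff (⇑(fourier k) : AddCircle T2 → ℂ) j
      = (fourierBasis (T := T2)).repr (fourierLp 2 k) j := by
    rw [fourierBasis_repr, fourierCoeff_toLp]
  rw [h1, HilbertBasis.repr_apply_apply, ← coe_fourierBasis]
  exact orthonormal_iff_ite.mp (coe_fourierBasis (T := T2) ▸ orthonormal_fourier) j k

lemma poly_parseval (s : Finset ℤ) (c : ℤ → ℂ) :
    I2 (fun t => ∑ k ∈ s, c k * fourier k t) = ∑ k ∈ s, ‖c k‖ ^ 2 := by
  have hc : Continuous (fun t : AddCircle T2 => ∑ k ∈ s, c k * fourier k t) :=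
    continuous_finset_sum _ fun k _ => continuous_const.mul (map_continuous (fourier k))
  rw [← (parseval_cont hc).1]
  have hco : ∀ j : ℤ, fourierCoeff (fun t : AddCircle T2 => ∑ k ∈ s, c k * fourier k t) j
      = if j ∈ s then c j else 0 := by
    intro j
    rw [fourierCoeff_sum s (fun k t => c k * fourier k t) (fun k => continuous_const.mul (map_continuous (fourier k))) j]
    have : ∀ k ∈ s, fourierCoeff (fun t : AddCircle T2 => c k * fourier k t) j
        = if k = j then c k else 0 := by
      intro k _
      rw [fourierCoeff.const_mul, fourierCoeff_fourier]
      by_cases h : j = k <;> simp [h, eq_comm]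
    rw [Finset.sum_congr rfl this, Finset.sum_ite_eq']
  calc ∑' j : ℤ, ‖fourierCoeff (fun t : AddCircle T2 => ∑ k ∈ s, c k * fourier k t) j‖ ^ 2
      = ∑' j : ℤ, ‖if j ∈ s then c j else 0‖ ^ 2 := by simp_rw [hco]
    _ = ∑ j ∈ s, ‖if j ∈ s then c j else 0‖ ^ 2 := by
        apply tsum_eq_sum
        intro j hj
        simp [hj]
    _ = ∑ k ∈ s, ‖c k‖ ^ 2 := by
        apply Finset.sum_congr rfl
        intro k hk; simp [hk]

end TP
namespace TP
open AddCircle ContinuousMap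

def emb (n : ℕ) : Fin n ↪ ℤ :=
  ⟨fun j => ((j : ℕ) : ℤ), by intro a b h; simp only at h; exact Fin.val_injective (by exact_mod_cast h)⟩

lemma finsum_to_int {n : ℕ} (F : ℤ → ℝ) :
    ∑ j : Fin n, F ((j : ℕ) : ℤ) = ∑ i ∈ Finset.univ.map (emb n), F i := by
  rw [Finset.sum_map]; rfl

lemma exists_ext {n : ℕ} (x : Fin n → ℂ) :
    ∃ c : ℤ → ℂ, (∀ j : Fin n, c ((j : ℕ) : ℤ) = x j) ∧
      (∀ i : ℤ, i ∉ Finset.univ.map (emb n) → c i = 0) := by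
  refine ⟨fun i => if hi : 0 ≤ i ∧ i < n then x ⟨i.toNat, by omega⟩ else 0, fun j => ?_, ?_⟩
  · have hj : (0:ℤ) ≤ (j:ℤ) ∧ ((j:ℕ):ℤ) < n := by
      constructor <;> [positivity; exact_mod_cast j.isLt]
    dsimp only
    rw [dif_pos hj]
    congr 1 <;> omega
  · intro i hi
    dsimp only
    rw [dif_neg]
    intro h
    refine hi ?_
    simp only [Finset.mem_map, Finset.mem_univ, true_and, emb, Function.Embedding.coeFn_mk]
    exact ⟨⟨i.toNat, by omega⟩, by show ((i.toNat : ℕ) : ℤ) = i; omega⟩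

lemma euclidean_norm_sq {n : ℕ} (x : Fin n → ℂ) :
    ‖(WithLp.equiv 2 (Fin n → ℂ)).symm x‖ ^ 2 = ∑ j, ‖x j‖ ^ 2 := by
  rw [EuclideanSpace.norm_eq]
  rw [Real.sq_sqrt (by positivity)]
  rfl

lemma clm_apply_norm_sq {n : ℕ} (M : Matrix (Fin n) (Fin n) ℂ) (x : Fin n → ℂ) :
    ‖Matrix.toEuclideanCLM (𝕜 := ℂ) M ((WithLp.equiv 2 (Fin n → ℂ)).symm x)‖ ^ 2
      = ∑ j, ‖M.mulVec x j‖ ^ 2 := by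
  rw [WithLp.equiv_symm_apply, Matrix.toEuclideanCLM_toLp, ← WithLp.equiv_symm_apply, euclidean_norm_sq]

lemma mulVec_eq {a : ℝ → ℂ} (ha : Continuous a) (hper : Function.Periodic a T2)
    {n : ℕ} (x : Fin n → ℂ) (j : Fin n) :
    (toeplitz (fc a) n).mulVec x j
      = fourierCoeff (fun t => hper.lift t * ∑ k : Fin n, x k * fourier ((k:ℕ):ℤ) t)
          ((j : ℕ) : ℤ) := by
  have hA : Continuous hper.lift := lift_continuous ha hper
  have h1 : (fun t : AddCircle T2 => hper.lift t * ∑ k : Fin n, x k * fourier ((k:ℕ):ℤ) t)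
      = fun t => ∑ k : Fin n, x k * (fourier ((k:ℕ):ℤ) t * hper.lift t) := by
    ext t; rw [Finset.mul_sum]; apply Finset.sum_congr rfl; intros; ring
  rw [h1, fourierCoeff_sum Finset.univ (fun k t => x k * (fourier ((k:ℕ):ℤ) t * hper.lift t))
    (fun k => continuous_const.mul ((map_continuous (fourier _)).mul hA))]
  have h2 : ∀ k : Fin n, fourierCoeff (fun t => x k * (fourier ((k:ℕ):ℤ) t * hper.lift t))
      (((j:ℕ):ℤ)) = x k * fc a (((j:ℕ):ℤ) - ((k:ℕ):ℤ)) := by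
    intro k
    rw [fourierCoeff.const_mul, fourierCoeff_fourier_mul, fc_eq_fourierCoeff ha hper]
  rw [Finset.sum_congr rfl (fun k _ => h2 k)]
  simp only [Matrix.mulVec, dotProduct, toeplitz, Matrix.of_apply]
  apply Finset.sum_congr rfl
  intros; ring

lemma I2_const_mul (c : ℂ) (g : AddCircle T2 → ℂ) :
    I2 (fun t => c * g t) = ‖c‖ ^ 2 * I2 g := by
  unfold I2
  rw [← integral_const_mul]
  congr 1; ext t
  rw [norm_mul, mul_pow]

section Main
variable {a : ℝ → ℂ} (ha : Continuous a) (hper : Function.Periodic a T2)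

def Acm (ha : Continuous a) (hper : Function.Periodic a T2) : C(AddCircle T2, ℂ) :=
  ⟨hper.lift, lift_continuous ha hper⟩

lemma sSup_eq_norm : sSup (Set.range fun θ : ℝ => ‖a θ‖) = ‖Acm ha hper‖ := by
  have hr : (Set.range fun θ : ℝ => ‖a θ‖) = Set.range fun t : AddCircle T2 => ‖Acm ha hper t‖ := by
    ext v
    constructor
    · rintro ⟨θ, rfl⟩
      exact ⟨(θ : AddCircle T2), by simp [Acm, Function.Periodic.lift_coe]⟩
    · rintro ⟨t, rfl⟩
      obtain ⟨θ, rfl⟩ := QuotientAddGroup.mk_surjective t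
      exact ⟨θ, by simp [Acm, Function.Periodic.lift_coe]⟩
  rw [hr, ContinuousMap.norm_eq_iSup_norm]
  rfl

lemma pointwise_le (t : AddCircle T2) : ‖Acm ha hper t‖ ≤ ‖Acm ha hper‖ :=
  ContinuousMap.norm_coe_le_norm _ t

lemma upper_bound (n : ℕ) : specNorm (toeplitz (fc a) n) ≤ ‖Acm ha hper‖ := by
  apply ContinuousLinearMap.opNorm_le_bound _ (norm_nonneg _)
  intro y
  set x : Fin n → ℂ := WithLp.equiv 2 (Fin n → ℂ) y with hx
  have hy : y = (WithLp.equiv 2 (Fin n → ℂ)).symm x := by simp [hx]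
  set p : AddCircle T2 → ℂ := fun t => ∑ k : Fin n, x k * fourier ((k:ℕ):ℤ) t with hp
  have hpc : Continuous p :=
    continuous_finset_sum _ fun k _ => continuous_const.mul (map_continuous (fourier _))
  have hApc : Continuous fun t => hper.lift t * p t := (lift_continuous ha hper).mul hpc
  have key : ‖Matrix.toEuclideanCLM (𝕜 := ℂ) (toeplitz (fc a) n) y‖ ^ 2
      ≤ ‖Acm ha hper‖ ^ 2 * ‖y‖ ^ 2 := by
    rw [hy, clm_apply_norm_sq]
    have h1 : ∑ j, ‖(toeplitz (fc a) n).mulVec x j‖ ^ 2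
        = ∑ j : Fin n, ‖fourierCoeff (fun t => hper.lift t * p t) ((j:ℕ):ℤ)‖ ^ 2 := by
      apply Finset.sum_congr rfl
      intro j _
      rw [mulVec_eq ha hper]
    rw [h1, finsum_to_int (fun i => ‖fourierCoeff (fun t => hper.lift t * p t) i‖ ^ 2)]
    calc ∑ i ∈ Finset.univ.map (emb n), ‖fourierCoeff (fun t => hper.lift t * p t) i‖ ^ 2
        ≤ I2 (fun t => hper.lift t * p t) := bessel hApc _
      _ ≤ I2 (fun t => (‖Acm ha hper‖ : ℂ) * p t) := by
          apply I2_mono (h := fun t => (‖Acm ha hper‖ : ℂ) * p t) hApc (continuous_const.mul hpc)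
          intro t
          rw [norm_mul, norm_mul, Complex.norm_real, Real.norm_eq_abs,
            abs_of_nonneg (norm_nonneg _)]
          exact mul_le_mul_of_nonneg_right (pointwise_le ha hper t) (norm_nonneg _)
      _ = ‖Acm ha hper‖ ^ 2 * I2 p := by
          rw [I2_const_mul, Complex.norm_real, Real.norm_eq_abs, abs_of_nonneg (norm_nonneg _)]
      _ = ‖Acm ha hper‖ ^ 2 * ‖y‖ ^ 2 := by
          congr 1
          obtain ⟨c, hc1, hc2⟩ := exists_ext x
          have hps : p = fun t => ∑ i ∈ Finset.univ.map (emb n), c i * fourier i t := by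
            ext t
            rw [Finset.sum_map]
            apply Finset.sum_congr rfl
            intro j _
            rw [show ((emb n) j) = ((j:ℕ):ℤ) from rfl, hc1]
          rw [hps, poly_parseval, hy, euclidean_norm_sq, Finset.sum_map]
          apply Finset.sum_congr rfl
          intro j _
          rw [show (emb n) j = ((j:ℕ):ℤ) from rfl, hc1]
  have hnn : (0:ℝ) ≤ ‖Acm ha hper‖ * ‖y‖ := by positivity
  nlinarith [norm_nonneg (Matrix.toEuclideanCLM (𝕜 := ℂ) (toeplitz (fc a) n) y),
    norm_nonneg ((Matrix.toEuclideanCLM (𝕜 := ℂ) (toeplitz (fc a) n)) y)]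

end Main
end TP
namespace TP
open AddCircle ContinuousMap

lemma sum_shift {M : Type*} [AddCommMonoid M] (n s : ℕ) (F : ℤ → M) :
    ∑ j : Fin n, F ((j:ℤ) - (s:ℤ)) = ∑ m ∈ Finset.Ico (-(s:ℤ)) ((n:ℤ) - (s:ℤ)), F m := by
  rw [Fin.sum_univ_eq_sum_range (fun i : ℕ => F ((i:ℤ) - (s:ℤ))) n]
  refine Finset.sum_nbij' (fun i => (i:ℤ) - (s:ℤ)) (fun m => (m + (s:ℤ)).toNat) ?_ ?_ ?_ ?_ ?_
  · intro i hi
    simp only [Finset.mem_range] at hi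
    simp only [Finset.mem_Ico]
    omega
  · intro m hm
    simp only [Finset.mem_Ico] at hm
    simp only [Finset.mem_range]
    omega
  · intro i hi
    simp only [Finset.mem_range] at hi
    omega
  · intro m hm
    simp only [Finset.mem_Ico] at hm
    omega
  · intro i _
    rfl

lemma I2_le_I2_add {g h : AddCircle T2 → ℂ} (hg : Continuous g) (hh : Continuous h) (C : ℝ)
    (hpt : ∀ t, ‖g t‖ ^ 2 ≤ ‖h t‖ ^ 2 + C) : I2 g ≤ I2 h + C := by
  have h1 : I2 g ≤ ∫ t, (‖h t‖ ^ 2 + C) ∂HM := by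
    refine integral_mono (cont_integrable' (by fun_prop)) ?_ hpt
    exact (cont_integrable' (by fun_prop)).add (integrable_const C)
  rwa [integral_add (cont_integrable' (by fun_prop)) (integrable_const C), integral_const,
    probReal_univ, one_smul] at h1

lemma poly_shift (c : ℤ →₀ ℂ) {n s : ℕ}
    (hsupp : ∀ m ∈ c.support, -(s:ℤ) ≤ m ∧ m < (n:ℤ) - (s:ℤ)) (t : AddCircle T2) :
    ∑ k : Fin n, c ((k:ℤ) - (s:ℤ)) * fourier ((k:ℕ):ℤ) t
      = fourier (s:ℤ) t * ∑ m ∈ c.support, c m * fourier m t := by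
  have h1 : ∑ k : Fin n, c ((k:ℤ) - (s:ℤ)) * fourier ((k:ℕ):ℤ) t
      = ∑ m ∈ Finset.Ico (-(s:ℤ)) ((n:ℤ)-(s:ℤ)), c m * fourier (m + (s:ℤ)) t := by
    rw [← sum_shift n s (fun m => c m * fourier (m + (s:ℤ)) t)]
    apply Finset.sum_congr rfl
    intro j _
    rw [show ((j:ℤ) - (s:ℤ)) + (s:ℤ) = ((j:ℕ):ℤ) by omega]
  rw [h1, ← Finset.sum_subset (fun m hm => Finset.mem_Ico.mpr (hsupp m hm))
      (fun m _ hm => by rw [Finsupp.notMem_support_iff.mp hm, zero_mul]),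
    Finset.mul_sum]
  apply Finset.sum_congr rfl
  intro m _
  rw [fourier_add]
  ring

lemma eventually_window (F : Finset ℤ) :
    ∀ᶠ n : ℕ in atTop, ∀ m ∈ F, -(((n/2 : ℕ)):ℤ) ≤ m ∧ m < (n:ℤ) - ((n/2 : ℕ):ℤ) := by
  set B := F.sup (fun m => m.natAbs) with hB
  filter_upwards [eventually_ge_atTop (2*B + 2)] with n hn m hm
  have h1 : m.natAbs ≤ B := Finset.le_sup (f := fun m => m.natAbs) hm
  constructor <;> omega

section Main
variable {a : ℝ → ℂ} (ha : Continuous a) (hper : Function.Periodic a T2)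


lemma b1 {np nφ δ : ℝ} (h3 : np - nφ ≤ δ) (h2 : nφ ≤ 1) (hδ1 : δ ≤ 1) (hδ0 : 0 ≤ δ)
    (h4 : 0 ≤ nφ) (h5 : 0 ≤ np) : np^2 ≤ nφ^2 + 3*δ := by nlinarith

lemma b2 {np nφ δ : ℝ} (h : nφ - np ≤ δ) (hnp2 : np ≤ 2) (h4 : 0 ≤ nφ) (h5 : 0 ≤ np)
    (hδ0 : 0 ≤ δ) (hδ1 : δ ≤ 1) : nφ^2 ≤ np^2 + 5*δ := by nlinarith

lemma b3 {u v Mv δ : ℝ} (hv : v ≤ u + Mv*δ) (hu : u ≤ 2*Mv) (h0 : 0 ≤ u) (hv0 : 0 ≤ v)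
    (hδ0 : 0 ≤ δ) (hδ1 : δ ≤ 1) (hM0 : 0 ≤ Mv) : v^2 ≤ u^2 + 5*(Mv^2*δ) := by
  have h2 : v*v ≤ (u+Mv*δ)*(u+Mv*δ) :=
    mul_le_mul hv hv hv0 (by positivity)
  have h3 : u*(Mv*δ) ≤ 2*Mv*(Mv*δ) := mul_le_mul_of_nonneg_right hu (by positivity)
  have h4 : (Mv*Mv*δ)*δ ≤ (Mv*Mv*δ)*1 := mul_le_mul_of_nonneg_left hδ1 (by positivity)
  nlinarith [h2, h3, h4]

lemma b4 {x y : ℝ} (h : x^2 ≤ y^2) (hx : 0 ≤ x) (hy : 0 ≤ y) : x ≤ y := by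
  nlinarith [sq_nonneg (x - y), sq_nonneg (x + y)]

lemma b5 {A B C : ℝ} (h : A ≤ B*C) (ha : 0 ≤ A) (hb : 0 ≤ B) (hc : 0 ≤ C) :
    A^2 ≤ B^2 * C^2 := by nlinarith

set_option maxHeartbeats 2000000 in
lemma lower_bound (ε : ℝ) (hε : 0 < ε) :
    ∀ᶠ n : ℕ in atTop, ‖Acm ha hper‖ - ε ≤ specNorm (toeplitz (fc a) n) := by
  set M := ‖Acm ha hper‖ with hM
  rcases le_or_gt M ε with hMε | hMε
  · filter_upwards with n
    have h0 : (0:ℝ) ≤ specNorm (toeplitz (fc a) n) := norm_nonneg _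
    linarith
  have hM0 : 0 < M := lt_of_le_of_lt hε.le hMε |>.trans_le le_rfl
  set A := hper.lift with hA
  have hAc : Continuous A := lift_continuous ha hper
  have hAcm : ∀ t, Acm ha hper t = A t := fun t => rfl
  -- find t0 with large |A t0|
  have hsup : M = ⨆ t, ‖Acm ha hper t‖ := ContinuousMap.norm_eq_iSup_norm _
  have hlt : M - ε/4 < ⨆ t, ‖Acm ha hper t‖ := by rw [← hsup]; linarith
  obtain ⟨t0, ht0⟩ := exists_lt_of_lt_ciSup hlt
  rw [hAcm] at ht0
  set m0 : ℝ := M - ε/2 with hm0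
  have hm0pos : 0 < m0 := by simp only [hm0]; linarith
  have hm0lt : M - ε < m0 := by simp only [hm0]; linarith
  -- ball inside {m0 < ‖A t‖}
  have hVopen : IsOpen {t : AddCircle T2 | m0 < ‖A t‖} :=
    isOpen_lt continuous_const hAc.norm
  obtain ⟨r, hr, hball⟩ := Metric.isOpen_iff.mp hVopen t0 (by simp only [Set.mem_setOf_eq, hm0]; linarith)
  -- bump function
  set φr : AddCircle T2 → ℝ := fun t => max 0 (1 - dist t t0 / r) with hφr
  have hφrc : Continuous φr :=
    continuous_const.max (continuous_const.sub ((continuous_id.dist continuous_const).div_const r))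
  set φ : AddCircle T2 → ℂ := fun t => ((φr t : ℝ) : ℂ) with hφ
  have hφc : Continuous φ := Complex.continuous_ofReal.comp hφrc
  have hφnorm : ∀ t, ‖φ t‖ = φr t := by
    intro t
    rw [hφ, Complex.norm_real, Real.norm_eq_abs, abs_of_nonneg (le_max_left _ _)]
  have hφle1 : ∀ t, ‖φ t‖ ≤ 1 := by
    intro t
    rw [hφnorm]
    apply max_le (by norm_num)
    have : 0 ≤ dist t t0 / r := by positivity
    linarith
  have hφsupp : ∀ t, φ t ≠ 0 → m0 < ‖A t‖ := by
    intro t h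
    apply hball
    rw [Metric.mem_ball]
    by_contra hc
    push_neg at hc
    apply h
    rw [hφ]
    norm_cast
    rw [hφr]
    have : 1 - dist t t0 / r ≤ 0 := by
      rw [sub_nonpos, le_div_iff₀ hr]
      linarith
    simp [max_eq_left this]
  -- lower bound for β := I2 φ
  set β := I2 φ with hβ
  have hballpos : 0 < HM (Metric.ball t0 (r/2)) :=
    Metric.isOpen_ball.measure_pos HM ⟨t0, Metric.mem_ball_self (by positivity)⟩
  have hβlow : (HM (Metric.ball t0 (r/2))).toReal / 4 ≤ β := by
    have hptball : ∀ t ∈ Metric.ball t0 (r/2), (1/4 : ℝ) ≤ ‖φ t‖ ^ 2 := by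
      intro t ht
      rw [Metric.mem_ball] at ht
      have h2 : dist t t0 / r ≤ 1/2 := by
        rw [div_le_iff₀ hr]
        linarith
      have h3 : (1/2 : ℝ) ≤ φr t := le_max_of_le_right (by linarith)
      rw [hφnorm]
      calc (1/4 : ℝ) = (1/2 : ℝ)^2 := by norm_num
        _ ≤ (φr t)^2 := pow_le_pow_left₀ (by norm_num) h3 2
    have h4 : (1/4 : ℝ) * (HM (Metric.ball t0 (r/2))).toReal
        ≤ ∫ t in Metric.ball t0 (r/2), ‖φ t‖ ^ 2 ∂HM := by
      have := setIntegral_ge_of_const_le Metric.isOpen_ball.measurableSet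
        (measure_ne_top _ _) hptball
        (cont_integrable' (g := fun t => ‖φ t‖ ^ 2) (E := ℝ) (by fun_prop)).integrableOn
      simpa [Measure.real, smul_eq_mul, mul_comm] using this
    have h5 : ∫ t in Metric.ball t0 (r/2), ‖φ t‖ ^ 2 ∂HM ≤ I2 φ := by
      apply setIntegral_le_integral (cont_integrable' (by fun_prop))
      filter_upwards with t
      positivity
    rw [hβ]
    linarith
  have hβpos : 0 < β := by
    have := ENNReal.toReal_pos hballpos.ne' (measure_ne_top _ _)
    linarith
  -- choose δ
  set g0 : ℝ := (m0^2 - (M-ε)^2) * β with hg0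
  have hMεnn : 0 ≤ M - ε := by linarith
  have hg0pos : 0 < g0 := by
    apply mul_pos _ hβpos
    have := pow_lt_pow_left₀ hm0lt hMεnn (n := 2) (by norm_num)
    linarith
  set δ : ℝ := min 1 (min (β/10) (g0/(16*M^2+1))) with hδ
  have hδpos : 0 < δ := by
    apply lt_min (by norm_num)
    apply lt_min (by positivity) (by positivity)
  have hδ1 : δ ≤ 1 := min_le_left _ _
  have hδβ : δ ≤ β/10 := le_trans (min_le_right _ _) (min_le_left _ _)
  have hδg : δ ≤ g0/(16*M^2+1) := le_trans (min_le_right _ _) (min_le_right _ _)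
  have h16 : (16*M^2+1)*δ ≤ g0 := by
    rw [← le_div_iff₀' (by positivity)]
    exact hδg
  -- approximate φ by trig polynomial
  set Φ : C(AddCircle T2, ℂ) := ⟨φ, hφc⟩ with hΦ
  have hΦmem : Φ ∈ closure ((Submodule.span ℂ (Set.range (@fourier T2)) : Submodule ℂ C(AddCircle T2, ℂ)) : Set C(AddCircle T2, ℂ)) := by
    rw [← Submodule.topologicalClosure_coe, span_fourier_closure_eq_top]
    trivial
  obtain ⟨Pc, hPcmem, hPcdist⟩ := Metric.mem_closure_iff.mp hΦmem δ hδpos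
  obtain ⟨c, hc⟩ := Finsupp.mem_span_range_iff_exists_finsupp.mp hPcmem
  set P : AddCircle T2 → ℂ := fun t => ∑ m ∈ c.support, c m * fourier m t with hP
  have hPC : Continuous P :=
    continuous_finset_sum _ fun k _ => continuous_const.mul (map_continuous (fourier _))
  have hPcP : ∀ t, Pc t = P t := by
    intro t
    rw [← hc, hP]
    rw [Finsupp.sum]
    rw [ContinuousMap.sum_apply]
    apply Finset.sum_congr rfl
    intro m _
    simp [smul_eq_mul]
  have hPφ : ∀ t, ‖P t - φ t‖ ≤ δ := by
    intro t
    rw [← hPcP]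
    calc ‖Pc t - φ t‖ = ‖(Pc - Φ) t‖ := by rw [ContinuousMap.sub_apply]; rfl
      _ ≤ ‖Pc - Φ‖ := ContinuousMap.norm_coe_le_norm _ t
      _ = dist Φ Pc := by rw [← dist_eq_norm, dist_comm]
      _ ≤ δ := hPcdist.le
  -- norm facts
  have hAle : ∀ t, ‖A t‖ ≤ M := fun t => hAcm t ▸ pointwise_le ha hper t
  have hPle : ∀ t, ‖P t‖ ≤ 2 := by
    intro t
    have h1 := hPφ t
    have h2 := hφle1 t
    have := norm_sub_norm_le (P t) (φ t)
    linarith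
  -- key integrals
  set S := I2 (fun t => A t * P t) with hS
  set Q := I2 P with hQ
  have hAPc : Continuous (fun t => A t * P t) := hAc.mul hPC
  have hAφc : Continuous (fun t => A t * φ t) := hAc.mul hφc
  have hQβ : Q ≤ β + 3*δ := by
    apply I2_le_I2_add hPC hφc
    intro t
    have h3 := norm_sub_norm_le (P t) (φ t)
    exact b1 (le_trans h3 (hPφ t)) (hφle1 t) hδ1 hδpos.le (norm_nonneg _) (norm_nonneg _)
  have hβQ : β ≤ Q + 5*δ := by
    have := I2_le_I2_add hφc hPC (5*δ) ?_
    · linarith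
    intro t
    have h3 := norm_sub_norm_le (φ t) (P t)
    rw [norm_sub_rev] at h3
    exact b2 (le_trans h3 (hPφ t)) (hPle t) (norm_nonneg _) (norm_nonneg _) hδpos.le hδ1
  have hQpos : 0 < Q := by linarith
  have hAφS : I2 (fun t => A t * φ t) ≤ S + 5*M^2*δ := by
    apply I2_le_I2_add hAφc hAPc
    intro t
    have h8 : ‖A t * φ t‖ = ‖A t‖ * ‖φ t‖ := norm_mul _ _
    have h9 : ‖A t * P t‖ = ‖A t‖ * ‖P t‖ := norm_mul _ _
    have h10 : ‖φ t‖ - ‖P t‖ ≤ δ := by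
      have := norm_sub_norm_le (φ t) (P t)
      rw [norm_sub_rev] at this
      linarith [hPφ t]
    have hv : ‖A t * φ t‖ ≤ ‖A t * P t‖ + M*δ := by
      rw [h8, h9]
      have hAtM := hAle t
      have hAt0 := norm_nonneg (A t)
      nlinarith [hδpos.le]
    have hu : ‖A t * P t‖ ≤ 2*M := by
      rw [h9]
      have := hPle t
      nlinarith [norm_nonneg (A t), hAle t, hM0.le]
    have := b3 hv hu (norm_nonneg _) (norm_nonneg _) hδpos.le hδ1 hM0.le
    linarith
  have hm0β : m0^2 * β ≤ I2 (fun t => A t * φ t) := by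
    have h1 : I2 (fun t => (m0:ℂ) * φ t) = m0^2 * β := by
      rw [I2_const_mul, hβ]
      congr 1
      rw [Complex.norm_real, Real.norm_eq_abs, abs_of_nonneg hm0pos.le]
    rw [← h1]
    apply I2_mono (g := fun t => (m0:ℂ) * φ t) (continuous_const.mul hφc) hAφc
    intro t
    rcases eq_or_ne (φ t) 0 with h | h
    · simp [h]
    · rw [norm_mul, norm_mul]
      apply mul_le_mul_of_nonneg_right _ (norm_nonneg _)
      rw [Complex.norm_real, Real.norm_eq_abs, abs_of_nonneg hm0pos.le]
      exact (hφsupp t h).le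
  have hSlow : m0^2*β - 5*M^2*δ ≤ S := by linarith
  -- Parseval/HasSum for A*P
  have hPar := parseval_cont hAPc
  have hHasSum : HasSum (fun m : ℤ => ‖fourierCoeff (fun t => A t * P t) m‖ ^ 2) S := by
    have h := hPar.2.hasSum
    rwa [hPar.1] at h
  set δ3 : ℝ := g0/2 with hδ3
  have hδ3pos : 0 < δ3 := by positivity
  obtain ⟨F, hF⟩ := (hHasSum.eventually (Metric.ball_mem_nhds S hδ3pos)).exists
  have hFlow : S - δ3 < ∑ m ∈ F, ‖fourierCoeff (fun t => A t * P t) m‖ ^ 2 := by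
    rw [Real.dist_eq, abs_lt] at hF
    linarith
  -- the eventual bound
  filter_upwards [eventually_window (F ∪ c.support)] with n hn
  set s : ℕ := n / 2 with hs
  set x : Fin n → ℂ := fun j => c ((j:ℤ) - (s:ℤ)) with hx
  have hsuppw : ∀ m ∈ c.support, -(s:ℤ) ≤ m ∧ m < (n:ℤ) - (s:ℤ) := by
    intro m hm
    exact hn m (Finset.mem_union_right _ hm)
  have hFw : ∀ m ∈ F, -(s:ℤ) ≤ m ∧ m < (n:ℤ) - (s:ℤ) := by
    intro m hm
    exact hn m (Finset.mem_union_left _ hm)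
  -- mulVec values
  have hmv : ∀ j : Fin n, (toeplitz (fc a) n).mulVec x j
      = fourierCoeff (fun t => A t * P t) ((j:ℤ) - (s:ℤ)) := by
    intro j
    rw [mulVec_eq ha hper]
    have heq : (fun t : AddCircle T2 => hper.lift t * ∑ k : Fin n, x k * fourier ((k:ℕ):ℤ) t)
        = fun t => fourier (s:ℤ) t * (A t * P t) := by
      ext t
      rw [hx]
      simp only []
      rw [poly_shift c hsuppw t]
      simp only [hA, hP]
      ring
    rw [heq, fourierCoeff_fourier_mul]
  -- sum of squares
  have hsumsq : ∑ j : Fin n, ‖(toeplitz (fc a) n).mulVec x j‖ ^ 2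
      = ∑ m ∈ Finset.Ico (-(s:ℤ)) ((n:ℤ) - (s:ℤ)), ‖fourierCoeff (fun t => A t * P t) m‖ ^ 2 := by
    rw [← sum_shift n s (fun m => ‖fourierCoeff (fun t => A t * P t) m‖ ^ 2)]
    apply Finset.sum_congr rfl
    intro j _
    rw [hmv j]
  have hsumsq_low : S - δ3 ≤ ∑ j : Fin n, ‖(toeplitz (fc a) n).mulVec x j‖ ^ 2 := by
    rw [hsumsq]
    refine le_trans hFlow.le ?_
    apply Finset.sum_le_sum_of_subset_of_nonneg
    · intro m hm
      rw [Finset.mem_Ico]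
      exact hFw m hm
    · intro m _ _
      positivity
  -- norm of x
  have hxnorm : ∑ j : Fin n, ‖x j‖ ^ 2 = Q := by
    rw [hx]
    simp only []
    rw [sum_shift n s (fun m => ‖c m‖ ^ 2)]
    rw [← Finset.sum_subset (fun m hm => Finset.mem_Ico.mpr (hsuppw m hm))
      (fun m _ hm => by rw [Finsupp.notMem_support_iff.mp hm]; simp)]
    rw [hQ, hP, poly_parseval]
  -- operator norm bound
  set TN := Matrix.toEuclideanCLM (𝕜 := ℂ) (toeplitz (fc a) n) with hTN
  set xE := (WithLp.equiv 2 (Fin n → ℂ)).symm x with hxE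
  have hTx : ‖TN xE‖ ^ 2 = ∑ j : Fin n, ‖(toeplitz (fc a) n).mulVec x j‖ ^ 2 :=
    clm_apply_norm_sq _ _
  have hxE2 : ‖xE‖ ^ 2 = Q := by rw [hxE, euclidean_norm_sq, hxnorm]
  have hop : ‖TN xE‖ ≤ ‖TN‖ * ‖xE‖ := TN.le_opNorm xE
  have hopsq : ‖TN xE‖ ^ 2 ≤ ‖TN‖ ^ 2 * ‖xE‖ ^ 2 :=
    b5 hop (norm_nonneg _) (norm_nonneg _) (norm_nonneg _)
  -- the chain
  have hMε2 : (M-ε)^2 ≤ M^2 := pow_le_pow_left₀ hMεnn (by linarith) 2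
  have hchain : (M-ε)^2 * Q ≤ S - δ3 := by
    have hstep1 : (M-ε)^2 * Q ≤ (M-ε)^2 * (β + 3*δ) :=
      mul_le_mul_of_nonneg_left hQβ (by positivity)
    have hstep3 : (M-ε)^2*δ ≤ M^2*δ := mul_le_mul_of_nonneg_right hMε2 hδpos.le
    linarith [hSlow, h16, hδpos.le, hstep1, hstep3]
  have hfinal : (M-ε)^2 ≤ ‖TN‖ ^ 2 := by
    have h1 : (M-ε)^2 * Q ≤ ‖TN‖^2 * Q := by
      rw [← hxE2]
      calc (M-ε)^2 * ‖xE‖^2 = (M-ε)^2 * Q := by rw [hxE2]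
        _ ≤ S - δ3 := hchain
        _ ≤ ∑ j : Fin n, ‖(toeplitz (fc a) n).mulVec x j‖ ^ 2 := hsumsq_low
        _ = ‖TN xE‖ ^ 2 := hTx.symm
        _ ≤ ‖TN‖ ^ 2 * ‖xE‖ ^ 2 := hopsq
    exact le_of_mul_le_mul_right h1 hQpos
  have hTNnn : 0 ≤ ‖TN‖ := norm_nonneg _
  have : M - ε ≤ ‖TN‖ := b4 hfinal hMεnn hTNnn
  rw [specNorm, ← hTN]
  exact this

end Main
end TP
namespace TP
open AddCircle ContinuousMap

theorem main {a : ℝ → ℂ} (ha : Continuous a) (hper : Function.Periodic a T2) :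
    Tendsto (fun n : ℕ => specNorm (toeplitz (fc a) n)) atTop
      (nhds (sSup (Set.range fun θ : ℝ => ‖a θ‖))) := by
  rw [sSup_eq_norm ha hper, Metric.tendsto_atTop]
  intro ε hε
  obtain ⟨N, hN⟩ := eventually_atTop.mp (lower_bound ha hper (ε/2) (by linarith))
  refine ⟨N, fun n hn => ?_⟩
  have h1 := upper_bound ha hper n
  have h2 := hN n hn
  rw [Real.dist_eq, abs_lt]
  constructor <;> linarith

lemma summ (b : ℤ → ℂ) (γ : ℝ) (hγ : γ < -1)
    (h1 : (fun m : ℕ => ‖b (m : ℤ)‖) =O[atTop] fun m : ℕ => (m : ℝ) ^ γ)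
    (h2 : (fun m : ℕ => ‖b (-(m : ℤ))‖) =O[atTop] fun m : ℕ => (m : ℝ) ^ γ) :
    Summable fun k : ℤ => ‖b k‖ := by
  have hg : Summable (fun m : ℕ => (m:ℝ)^γ) := Real.summable_nat_rpow.mpr hγ
  exact Summable.of_nat_of_neg (summable_of_isBigO_nat hg h1) (summable_of_isBigO_nat hg h2)

lemma part2 (b : ℤ → ℂ) (hsum : Summable fun k : ℤ => ‖b k‖) :
    ∃ aa : ℝ → ℂ, Continuous aa ∧ Function.Periodic aa T2 ∧ fc aa = b := by
  have hS : Summable (fun k : ℤ => b k • fourier (T := T2) k) := by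
    apply Summable.of_norm
    convert hsum using 2 with k
    rw [norm_smul, fourier_norm, mul_one]
  set G : C(AddCircle T2, ℂ) := ∑' k : ℤ, b k • fourier k with hGdef
  have hG : HasSum (fun k : ℤ => b k • fourier (T := T2) k) G := hS.hasSum
  set aa : ℝ → ℂ := fun θ => G (θ : AddCircle T2) with haa
  have haac : Continuous aa := (map_continuous G).comp continuous_quotient_mk'
  have hpaa : Function.Periodic aa T2 := by
    intro θ
    simp only [haa]
    rw [coe_add_period]
  have hlift : hpaa.lift = ⇑G := by
    funext t
    obtain ⟨θ, rfl⟩ := QuotientAddGroup.mk_surjective t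
    rw [Function.Periodic.lift_coe]
  refine ⟨aa, haac, hpaa, funext fun m => ?_⟩
  rw [fc_eq_fourierCoeff haac hpaa, hlift]
  -- fourierCoeff G m = b m
  have hGL : HasSum (fun k : ℤ => b k • fourierLp (T := T2) 2 k)
      (ContinuousMap.toLp (E := ℂ) 2 HM ℂ G) := by
    have := hG.mapL (ContinuousMap.toLp (E := ℂ) 2 HM ℂ)
    simpa only [_root_.map_smul] using this
  have hinner := hGL.mapL (innerSL ℂ (fourierLp (T := T2) 2 m))
  have hfun : (fun k : ℤ => (innerSL ℂ (fourierLp (T := T2) 2 m)) (b k • fourierLp 2 k))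
      = fun k : ℤ => if k = m then b m else 0 := by
    funext k
    rw [innerSL_apply_apply, inner_smul_right]
    have := orthonormal_iff_ite.mp (orthonormal_fourier (T := T2)) m k
    rw [this]
    by_cases h : k = m
    · simp [h]
    · simp [h, Ne.symm h]
  rw [hfun] at hinner
  have hbm : (innerSL ℂ (fourierLp (T := T2) 2 m)) (ContinuousMap.toLp (E := ℂ) 2 HM ℂ G) = b m :=
    hinner.unique (hasSum_ite_eq m (b m))
  rw [innerSL_apply_apply] at hbm
  have hrepr : fourierCoeff (⇑G : AddCircle T2 → ℂ) m
      = (fourierBasis (T := T2)).repr (ContinuousMap.toLp (E := ℂ) 2 HM ℂ G) m := by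
    rw [fourierBasis_repr, fourierCoeff_toLp]
  rw [hrepr, HilbertBasis.repr_apply_apply, ← hbm, coe_fourierBasis]

end TP

theorem stmt3 (a : ℝ → ℂ) (ha : Continuous a) (hper : Function.Periodic a (2 * π)) :
    Tendsto (fun n : ℕ => specNorm (toeplitz (fc a) n)) atTop
      (nhds (sSup (Set.range fun θ : ℝ => ‖a θ‖))) ∧
    ∀ (b : ℤ → ℂ) (γ : ℝ), γ < -1 →
      ((fun m : ℕ => ‖b (m : ℤ)‖) =O[atTop] fun m : ℕ => (m : ℝ) ^ γ) →
      ((fun m : ℕ => ‖b (-(m : ℤ))‖) =O[atTop] fun m : ℕ => (m : ℝ) ^ γ) →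
      ∃ L : ℝ, Tendsto (fun n : ℕ => specNorm (toeplitz b n)) atTop (nhds L) := by
  constructor
  · exact TP.main ha hper
  · intro b γ hγ h1 h2
    obtain ⟨aa, haac, hpaa, hfc⟩ := TP.part2 b (TP.summ b γ hγ h1 h2)
    refine ⟨sSup (Set.range fun θ : ℝ => ‖aa θ‖), ?_⟩
    have := TP.main haac hpaa
    rwa [hfc] at this
end
end

section
/- For 0 < α < 1/2, let K_α be the integral operator on L²(0,1) with kernel |x-y|^{2α-1}. Then (1/(2α)) · (2/(4α+1) + 2Γ(2α+1)²/Γ(4α+2))^{1/2} ≤ ‖K_α‖ ≤ 1/α. -/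
open MeasureTheory Filter Asymptotics Real Set

open intervalIntegral
open scoped ENNReal NNReal

lemma II_left {r x : ℝ} (hr : -1 < r) (hx : 0 ≤ x) :
    IntervalIntegrable (fun y => |x - y| ^ r) volume 0 x := by
  have base : IntervalIntegrable (fun y : ℝ => y ^ r) volume 0 x :=
    intervalIntegrable_rpow' hr
  have h := base.comp_sub_left x
  simp only [sub_self, sub_zero] at h
  refine h.symm.congr ?_
  intro y hy
  dsimp only
  rw [uIoc_of_le hx] at hy
  rw [abs_of_nonneg (by linarith [hy.2] : (0:ℝ) ≤ x - y)]

lemma II_right {r x : ℝ} (hr : -1 < r) (hx : x ≤ 1) :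
    IntervalIntegrable (fun y => |x - y| ^ r) volume x 1 := by
  have base : IntervalIntegrable (fun y : ℝ => y ^ r) volume 0 (1 - x) :=
    intervalIntegrable_rpow' hr
  have h := base.comp_sub_right x
  simp only [zero_add, sub_add_cancel] at h
  refine h.congr ?_
  intro y hy
  dsimp only
  rw [uIoc_of_le hx] at hy
  rw [abs_of_nonpos (by linarith [hy.1] : x - y ≤ 0), neg_sub]

lemma II_full {r x : ℝ} (hr : -1 < r) (hx : x ∈ Icc (0:ℝ) 1) :
    IntegrableOn (fun y => |x - y| ^ r) (Ioo (0:ℝ) 1) volume := by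
  have := ((II_left hr hx.1).trans (II_right hr hx.2))
  rw [intervalIntegrable_iff_integrableOn_Ioc_of_le (by norm_num)] at this
  exact this.mono_set Ioo_subset_Ioc_self

lemma integral_kernel {r x : ℝ} (hr : -1 < r) (hr0 : r < 0) (hx : x ∈ Icc (0:ℝ) 1) :
    ∫ y in Ioo (0:ℝ) 1, |x - y| ^ r = (x ^ (r+1) + (1-x) ^ (r+1)) / (r+1) := by
  have hr1 : r + 1 ≠ 0 := by linarith
  have h1 : ∫ y in (0:ℝ)..x, |x - y| ^ r = x ^ (r+1) / (r+1) := by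
    have e1 : ∫ y in (0:ℝ)..x, |x - y| ^ r = ∫ y in (0:ℝ)..x, (x - y) ^ r := by
      refine intervalIntegral.integral_congr fun y hy => ?_
      rw [uIcc_of_le hx.1] at hy
      rw [abs_of_nonneg (by linarith [hy.2] : (0:ℝ) ≤ x - y)]
    rw [e1, intervalIntegral.integral_comp_sub_left (fun y : ℝ => y ^ r) x,
      sub_self, sub_zero, integral_rpow (Or.inl hr),
      Real.zero_rpow hr1, sub_zero]
  have h2 : ∫ y in x..(1:ℝ), |x - y| ^ r = (1-x) ^ (r+1) / (r+1) := by
    have e1 : ∫ y in x..(1:ℝ), |x - y| ^ r = ∫ y in x..(1:ℝ), (y - x) ^ r := by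
      refine intervalIntegral.integral_congr fun y hy => ?_
      rw [uIcc_of_le hx.2] at hy
      rw [abs_of_nonpos (by linarith [hy.1] : x - y ≤ 0), neg_sub]
    rw [e1, intervalIntegral.integral_comp_sub_right (fun y : ℝ => y ^ r) x,
      sub_self, integral_rpow (Or.inl hr), Real.zero_rpow hr1, sub_zero]
  have split : ∫ y in (0:ℝ)..1, |x - y| ^ r
      = (∫ y in (0:ℝ)..x, |x - y| ^ r) + ∫ y in x..(1:ℝ), |x - y| ^ r :=
    (intervalIntegral.integral_add_adjacent_intervals (II_left hr hx.1)
      (II_right hr hx.2)).symm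
  rw [← MeasureTheory.integral_Ioc_eq_integral_Ioo,
    ← intervalIntegral.integral_of_le (by norm_num : (0:ℝ) ≤ 1), split, h1, h2,
    ← add_div]

lemma cross_integral {a : ℝ} (ha : 0 < a) :
    ∫ x in Ioo (0:ℝ) 1, x ^ a * (1-x) ^ a
      = Real.Gamma (a+1) ^ 2 / Real.Gamma (2*a+2) := by
  have h1 : (0:ℝ) < a + 1 := by linarith
  have hre : 0 < Complex.re ((a:ℝ)+1 : ℂ) := by
    simpa using h1
  have hb := Complex.Gamma_mul_Gamma_eq_betaIntegral (s := ((a:ℝ):ℂ)+1)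
    (t := ((a:ℝ):ℂ)+1) hre hre
  have hbeta : Complex.betaIntegral (((a:ℝ):ℂ)+1) (((a:ℝ):ℂ)+1)
      = ((∫ x in (0:ℝ)..1, x ^ a * (1-x) ^ a : ℝ) : ℂ) := by
    rw [Complex.betaIntegral, ← intervalIntegral.integral_ofReal]
    refine intervalIntegral.integral_congr fun x hx => ?_
    rw [uIcc_of_le (by norm_num : (0:ℝ) ≤ 1)] at hx
    have h0x : (0:ℝ) ≤ x := hx.1
    have h1x : (0:ℝ) ≤ 1 - x := by linarith [hx.2]
    simp only [add_sub_cancel_right]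
    push_cast
    rw [show ((1:ℂ) - (x:ℂ)) = (((1 - x : ℝ)):ℂ) by push_cast; ring,
      ← Complex.ofReal_cpow h0x, ← Complex.ofReal_cpow h1x, ← Complex.ofReal_mul]
  have hsum : (((a:ℝ):ℂ)+1) + (((a:ℝ):ℂ)+1) = (((2*a+2 : ℝ)):ℂ) := by push_cast; ring
  have hg1 : (((a:ℝ):ℂ)+1) = (((a+1 : ℝ)):ℂ) := by push_cast; ring
  rw [hbeta, hsum, hg1, Complex.Gamma_ofReal, Complex.Gamma_ofReal] at hb
  have hb' : Real.Gamma (a+1) * Real.Gamma (a+1)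
      = Real.Gamma (2*a+2) * ∫ x in (0:ℝ)..1, x ^ a * (1-x) ^ a := by
    exact_mod_cast hb
  have hgpos : 0 < Real.Gamma (2*a+2) := Real.Gamma_pos_of_pos (by linarith)
  rw [intervalIntegral.integral_of_le (by norm_num : (0:ℝ) ≤ 1),
    MeasureTheory.integral_Ioc_eq_integral_Ioo] at hb'
  field_simp [sq]
  rw [show (a+1)*2 = 2*a+2 by ring]
  linarith [hb']

lemma kernel_lintegral_le {r : ℝ} (hr : -1 < r) (hr0 : r < 0) {x : ℝ} (hx : x ∈ Icc (0:ℝ) 1) :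
    ∫⁻ y in Ioo (0:ℝ) 1, ENNReal.ofReal (|x - y| ^ r) ≤ ENNReal.ofReal (2/(r+1)) := by
  rw [← ofReal_integral_eq_lintegral_ofReal (II_full hr hx)
    (ae_of_all _ fun y => Real.rpow_nonneg (abs_nonneg _) r)]
  refine ENNReal.ofReal_le_ofReal ?_
  rw [integral_kernel hr hr0 hx]
  have hpos : (0:ℝ) < r + 1 := by linarith
  have h1 : x ^ (r+1) ≤ 1 := Real.rpow_le_one hx.1 hx.2 hpos.le
  have h2 : (1-x) ^ (r+1) ≤ 1 :=
    Real.rpow_le_one (by linarith [hx.2]) (by linarith [hx.1]) hpos.le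
  have hsum : x ^ (r+1) + (1-x) ^ (r+1) ≤ 2 := by linarith
  exact div_le_div_of_nonneg_right hsum hpos.le |>.trans_eq rfl

lemma opNorm_le {α : ℝ} (hα1 : 0 < α) (hα2 : α < 1/2) (K : L2I →L[ℂ] L2I)
    (hK : IsIntegralOp (fun x y => ((|x - y| ^ (2*α-1) : ℝ) : ℂ)) K) : ‖K‖ ≤ 1/α := by
  set r : ℝ := 2*α - 1 with hrdef
  have hr : -1 < r := by simp only [hrdef]; linarith
  have hr0 : r < 0 := by simp only [hrdef]; linarith
  have h2r : 2/(r+1) = 1/α := by rw [hrdef]; field_simp; ring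
  set C : ℝ≥0∞ := ENNReal.ofReal (1/α) with hCdef
  have hCbound : ∀ x ∈ Icc (0:ℝ) 1,
      ∫⁻ y in Ioo (0:ℝ) 1, ENNReal.ofReal (|x - y| ^ r) ≤ C := by
    intro x hx
    rw [hCdef, ← h2r]
    exact kernel_lintegral_le hr hr0 hx
  have hCbound' : ∀ y ∈ Icc (0:ℝ) 1,
      ∫⁻ x in Ioo (0:ℝ) 1, ENNReal.ofReal (|x - y| ^ r) ≤ C := by
    intro y hy
    simpa [abs_sub_comm] using hCbound y hy
  refine ContinuousLinearMap.opNorm_le_bound K (by positivity) fun f => ?_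
  set k' : ℝ → ℝ → ℝ≥0∞ := fun x y => ENNReal.ofReal (|x - y| ^ r) with hk'def
  set n : ℝ → ℝ≥0∞ := fun y => (‖(f : ℝ → ℂ) y‖₊ : ℝ≥0∞) with hndef
  have hnm : AEMeasurable n μ01 := AEStronglyMeasurable.enorm (Lp.aestronglyMeasurable f)
  have hkm : Measurable (fun p : ℝ × ℝ => k' p.1 p.2) := by
    simp only [hk'def]; fun_prop
  set F : ℝ → ℝ≥0∞ := fun x => ∫⁻ y in Ioo (0:ℝ) 1, k' x y * n y with hFdef
  set G : ℝ → ℝ≥0∞ := fun x => ∫⁻ y in Ioo (0:ℝ) 1, k' x y * n y ^ (2:ℝ) with hGdef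
  -- Step 1: a.e. pointwise bound
  have step1 : ∀ᵐ x ∂μ01, (‖(K f : ℝ → ℂ) x‖₊ : ℝ≥0∞) ≤ F x := by
    filter_upwards [hK f] with x hx
    rw [hx]
    refine (enorm_integral_le_lintegral_enorm _).trans ?_
    refine le_of_eq (lintegral_congr fun y => ?_)
    rw [enorm_mul]
    congr 1
    simp only [hk'def]
    rw [← Real.enorm_eq_ofReal (Real.rpow_nonneg (abs_nonneg _) r)]
    all_goals simp [hndef, enorm_eq_nnnorm]
  -- Step 2: Cauchy-Schwarz pointwise
  have step2 : ∀ x ∈ Icc (0:ℝ) 1, F x ^ (2:ℝ) ≤ C * G x := by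
    intro x hx
    have hconj : Real.HolderConjugate 2 2 := by constructor <;> norm_num
    have hg : AEMeasurable (fun y => (k' x y) ^ (1/2:ℝ)) (μ01) := by
      simp only [hk'def]; fun_prop
    have hh : AEMeasurable (fun y => (k' x y) ^ (1/2:ℝ) * n y) (μ01) := hg.mul hnm
    have hFx : F x = ∫⁻ y in Ioo (0:ℝ) 1,
        (k' x y) ^ (1/2:ℝ) * ((k' x y) ^ (1/2:ℝ) * n y) := by
      refine lintegral_congr fun y => ?_
      rw [← mul_assoc, ← ENNReal.rpow_add_of_nonneg _ _ (by norm_num) (by norm_num)]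
      norm_num
    have hold := ENNReal.lintegral_mul_le_Lp_mul_Lq μ01 hconj hg hh
    simp only [Pi.mul_apply] at hold
    have hA : ∫⁻ y in Ioo (0:ℝ) 1, ((k' x y) ^ (1/2:ℝ)) ^ (2:ℝ)
        = ∫⁻ y in Ioo (0:ℝ) 1, k' x y := by
      refine lintegral_congr fun y => ?_
      rw [← ENNReal.rpow_mul]; norm_num
    have hB : ∫⁻ y in Ioo (0:ℝ) 1, ((k' x y) ^ (1/2:ℝ) * n y) ^ (2:ℝ)
        = G x := by
      refine lintegral_congr fun y => ?_
      rw [ENNReal.mul_rpow_of_nonneg _ _ (by norm_num : (0:ℝ) ≤ 2), ← ENNReal.rpow_mul]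
      norm_num
    rw [hFx]
    calc (∫⁻ y in Ioo (0:ℝ) 1, (k' x y) ^ (1/2:ℝ) * ((k' x y) ^ (1/2:ℝ) * n y)) ^ (2:ℝ)
        ≤ ((∫⁻ y in Ioo (0:ℝ) 1, ((k' x y) ^ (1/2:ℝ)) ^ (2:ℝ)) ^ (1/2:ℝ)
          * (∫⁻ y in Ioo (0:ℝ) 1, ((k' x y) ^ (1/2:ℝ) * n y) ^ (2:ℝ)) ^ (1/2:ℝ)) ^ (2:ℝ) := by
          exact ENNReal.rpow_le_rpow hold (by norm_num)
      _ = (∫⁻ y in Ioo (0:ℝ) 1, k' x y) * G x := by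
          rw [ENNReal.mul_rpow_of_nonneg _ _ (by norm_num : (0:ℝ) ≤ 2),
            ← ENNReal.rpow_mul, ← ENNReal.rpow_mul, hA, hB]
          norm_num
      _ ≤ C * G x := by gcongr; exact hCbound x hx
  -- Step 3: integrate
  have hswap : ∫⁻ x in Ioo (0:ℝ) 1, G x ≤ C * ∫⁻ y in Ioo (0:ℝ) 1, n y ^ (2:ℝ) := by
    have hn2 : AEMeasurable (fun y => n y ^ (2:ℝ)) μ01 := by fun_prop
    have hunc : AEMeasurable (fun p : ℝ × ℝ => k' p.1 p.2 * n p.2 ^ (2:ℝ))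
        (μ01.prod μ01) := by
      exact hkm.aemeasurable.mul
        ((hn2.comp_quasiMeasurePreserving Measure.quasiMeasurePreserving_snd))
    calc ∫⁻ x in Ioo (0:ℝ) 1, G x
        = ∫⁻ y in Ioo (0:ℝ) 1, ∫⁻ x in Ioo (0:ℝ) 1, k' x y * n y ^ (2:ℝ) :=
          lintegral_lintegral_swap hunc
      _ = ∫⁻ y in Ioo (0:ℝ) 1, (n y ^ (2:ℝ)) * ∫⁻ x in Ioo (0:ℝ) 1, k' x y := by
          refine lintegral_congr fun y => ?_
          have hky : AEMeasurable (fun x => k' x y) μ01 := by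
            simp only [hk'def]; fun_prop
          rw [lintegral_mul_const'' _ hky, mul_comm]
      _ ≤ ∫⁻ y in Ioo (0:ℝ) 1, (n y ^ (2:ℝ)) * C := by
          refine lintegral_mono_ae ?_
          filter_upwards [ae_restrict_mem measurableSet_Ioo] with y hy
          exact mul_le_mul_right (hCbound' y (Ioo_subset_Icc_self hy)) _
      _ = C * ∫⁻ y in Ioo (0:ℝ) 1, n y ^ (2:ℝ) := by
          rw [lintegral_mul_const'' _ hn2]; ring
  have main : ∫⁻ x in Ioo (0:ℝ) 1, (‖(K f : ℝ → ℂ) x‖₊ : ℝ≥0∞) ^ (2:ℝ)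
      ≤ C * C * ∫⁻ y in Ioo (0:ℝ) 1, n y ^ (2:ℝ) := by
    calc ∫⁻ x in Ioo (0:ℝ) 1, (‖(K f : ℝ → ℂ) x‖₊ : ℝ≥0∞) ^ (2:ℝ)
        ≤ ∫⁻ x in Ioo (0:ℝ) 1, F x ^ (2:ℝ) := by
          refine lintegral_mono_ae ?_
          filter_upwards [step1] with x hx
          exact ENNReal.rpow_le_rpow hx (by norm_num)
      _ ≤ ∫⁻ x in Ioo (0:ℝ) 1, C * G x := by
          refine lintegral_mono_ae ?_
          filter_upwards [ae_restrict_mem measurableSet_Ioo] with x hx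
          exact step2 x (Ioo_subset_Icc_self hx)
      _ = C * ∫⁻ x in Ioo (0:ℝ) 1, G x := lintegral_const_mul' _ _ (by simp [hCdef])
      _ ≤ C * (C * ∫⁻ y in Ioo (0:ℝ) 1, n y ^ (2:ℝ)) := mul_le_mul_right hswap _
      _ = C * C * ∫⁻ y in Ioo (0:ℝ) 1, n y ^ (2:ℝ) := by ring
  -- Step 4: conclude
  have hsn : eLpNorm (K f) 2 μ01 ≤ C * eLpNorm f 2 μ01 := by
    rw [eLpNorm_eq_lintegral_rpow_enorm_toReal (by norm_num) (by norm_num),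
      eLpNorm_eq_lintegral_rpow_enorm_toReal (by norm_num) (by norm_num)]
    simp only [ENNReal.toReal_ofNat]
    have hCC : C = (C * C) ^ (1/(2:ℝ)) := by
      have h2 : C * C = C ^ (2:ℝ) := by rw [ENNReal.rpow_two, pow_two]
      rw [h2, ← ENNReal.rpow_mul]
      norm_num
    calc (∫⁻ x, (‖(K f : ℝ → ℂ) x‖₊ : ℝ≥0∞) ^ (2:ℝ) ∂μ01) ^ (1/(2:ℝ))
        ≤ (C * C * ∫⁻ y in Ioo (0:ℝ) 1, n y ^ (2:ℝ)) ^ (1/(2:ℝ)) :=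
          ENNReal.rpow_le_rpow main (by norm_num)
      _ = C * (∫⁻ y, n y ^ (2:ℝ) ∂μ01) ^ (1/(2:ℝ)) := by
          rw [ENNReal.mul_rpow_of_nonneg _ _ (by norm_num : (0:ℝ) ≤ 1/2), ← hCC]
  calc ‖K f‖ = (eLpNorm (K f) 2 μ01).toReal := Lp.norm_def _
    _ ≤ (C * eLpNorm f 2 μ01).toReal := by
        refine ENNReal.toReal_mono ?_ hsn
        exact ENNReal.mul_ne_top (by simp [hCdef]) (Lp.eLpNorm_ne_top f)
    _ = (1/α) * ‖f‖ := by
        rw [ENNReal.toReal_mul, hCdef, ENNReal.toReal_ofReal (by positivity), Lp.norm_def]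

instance : IsFiniteMeasure μ01 :=
  ⟨by rw [Measure.restrict_apply_univ, Real.volume_Ioo]; norm_num⟩

lemma opNorm_ge {α : ℝ} (hα1 : 0 < α) (hα2 : α < 1/2) (K : L2I →L[ℂ] L2I)
    (hK : IsIntegralOp (fun x y => ((|x - y| ^ (2*α-1) : ℝ) : ℂ)) K) :
    (1/(2*α)) * Real.sqrt (2/(4*α+1) + 2*Real.Gamma (2*α+1)^2/Real.Gamma (4*α+2)) ≤ ‖K‖ := by
  have hα0 : α ≠ 0 := hα1.ne'
  set S : ℝ := 2/(4*α+1) + 2*Real.Gamma (2*α+1)^2/Real.Gamma (4*α+2) with hSdef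
  have hS0 : 0 ≤ S := by
    have h1 : 0 < Real.Gamma (4*α+2) := Real.Gamma_pos_of_pos (by linarith)
    have h2 : (0:ℝ) < 4*α+1 := by linarith
    positivity
  set f : L2I := Lp.const 2 μ01 (1:ℂ) with hfdef
  have hfnorm : ‖f‖ = 1 := by
    have h := Lp.norm_const' (E := ℂ) (μ := μ01) (p := 2) (c := 1)
      (by norm_num) (by norm_num)
    rw [hfdef, h]
    simp [Measure.restrict_apply_univ, Real.volume_Ioo]
  set g : ℝ → ℝ := fun x => (x ^ (2*α) + (1-x) ^ (2*α)) / (2*α) with hgdef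
  have hr : -1 < 2*α - 1 := by linarith
  have hr0 : 2*α - 1 < 0 := by linarith
  -- K f agrees a.e. with g
  have hKf : (K f : ℝ → ℂ) =ᵐ[μ01] fun x => ((g x : ℝ) : ℂ) := by
    have hfc : (f : ℝ → ℂ) =ᵐ[μ01] fun _ => (1:ℂ) := Lp.coeFn_const _ _ _
    filter_upwards [hK f, ae_restrict_mem measurableSet_Ioo] with x hx hxm
    rw [hx]
    have e1 : ∫ y in Ioo (0:ℝ) 1, ((|x - y| ^ (2*α-1) : ℝ) : ℂ) * (f : ℝ → ℂ) y
        = ∫ y in Ioo (0:ℝ) 1, ((|x - y| ^ (2*α-1) : ℝ) : ℂ) := by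
      refine integral_congr_ae ?_
      filter_upwards [hfc] with y hy
      rw [hy, mul_one]
    have e3 : ∫ y in Ioo (0:ℝ) 1, ((|x - y| ^ (2*α-1) : ℝ) : ℂ)
        = ((∫ y in Ioo (0:ℝ) 1, |x - y| ^ (2*α-1) : ℝ) : ℂ) := integral_ofReal
    rw [e1, e3, integral_kernel hr hr0 (Ioo_subset_Icc_self hxm)]
    norm_num [hgdef]
  -- the L² norm of g
  have hcont1 : Continuous fun x : ℝ => x ^ (2*α) :=
    Real.continuous_rpow_const (by linarith)
  have hcont : Continuous g := by
    rw [hgdef]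
    exact ((hcont1).add (hcont1.comp (continuous_const.sub continuous_id))).div_const _
  have hint : IntegrableOn (fun x => g x ^ 2) (Ioo (0:ℝ) 1) volume :=
    ((hcont.pow 2).continuousOn.integrableOn_Icc).mono_set Ioo_subset_Icc_self
  have hg_nonneg : ∀ x ∈ Ioo (0:ℝ) 1, 0 ≤ g x := by
    intro x hx
    have h1 : (0:ℝ) ≤ x ^ (2*α) := Real.rpow_nonneg hx.1.le _
    have h2 : (0:ℝ) ≤ (1-x) ^ (2*α) := Real.rpow_nonneg (by linarith [hx.2]) _
    rw [hgdef]
    positivity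
  -- compute ∫ g²
  have hgsq : ∫ x in Ioo (0:ℝ) 1, g x ^ 2 = S / (4*α^2) := by
    have hIoo : MeasurableSet (Ioo (0:ℝ) 1) := measurableSet_Ioo
    have e1 : ∀ x ∈ Ioo (0:ℝ) 1, g x ^ 2
        = (x ^ (4*α) + (1-x) ^ (4*α) + 2 * (x ^ (2*α) * (1-x) ^ (2*α))) / (4*α^2) := by
      intro x hx
      have hx0 : (0:ℝ) ≤ x := hx.1.le
      have hx1 : (0:ℝ) ≤ 1 - x := by linarith [hx.2]
      have p1 : (x ^ (2*α)) ^ 2 = x ^ (4*α) := by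
        rw [← Real.rpow_natCast (x ^ (2*α)) 2, ← Real.rpow_mul hx0]
        norm_num; ring_nf
      have p2 : ((1-x) ^ (2*α)) ^ 2 = (1-x) ^ (4*α) := by
        rw [← Real.rpow_natCast ((1-x) ^ (2*α)) 2, ← Real.rpow_mul hx1]
        norm_num; ring_nf
      rw [hgdef]
      field_simp
      rw [mul_comm α 4, ← p1, ← p2]
      ring
    rw [setIntegral_congr_fun hIoo e1]
    have c1 : Continuous fun x : ℝ => x ^ (4*α) :=
      Real.continuous_rpow_const (by linarith)
    have c2 : Continuous fun x : ℝ => (1-x) ^ (4*α) :=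
      c1.comp (continuous_const.sub continuous_id)
    have c3 : Continuous fun x : ℝ => x ^ (2*α) * (1-x) ^ (2*α) :=
      hcont1.mul (hcont1.comp (continuous_const.sub continuous_id))
    have i1 : IntegrableOn (fun x : ℝ => x ^ (4*α)) (Ioo (0:ℝ) 1) volume :=
      (c1.continuousOn.integrableOn_Icc).mono_set Ioo_subset_Icc_self
    have i2 : IntegrableOn (fun x : ℝ => (1-x) ^ (4*α)) (Ioo (0:ℝ) 1) volume :=
      (c2.continuousOn.integrableOn_Icc).mono_set Ioo_subset_Icc_self
    have i3 : IntegrableOn (fun x : ℝ => x ^ (2*α) * (1-x) ^ (2*α)) (Ioo (0:ℝ) 1) volume :=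
      (c3.continuousOn.integrableOn_Icc).mono_set Ioo_subset_Icc_self
    have v1 : ∫ x in Ioo (0:ℝ) 1, x ^ (4*α) = 1/(4*α+1) := by
      rw [← MeasureTheory.integral_Ioc_eq_integral_Ioo,
        ← intervalIntegral.integral_of_le (by norm_num : (0:ℝ) ≤ 1),
        integral_rpow (Or.inl (by linarith)), Real.one_rpow,
        Real.zero_rpow (by linarith)]
      norm_num
    have v2 : ∫ x in Ioo (0:ℝ) 1, (1-x) ^ (4*α) = 1/(4*α+1) := by
      rw [← MeasureTheory.integral_Ioc_eq_integral_Ioo,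
        ← intervalIntegral.integral_of_le (by norm_num : (0:ℝ) ≤ 1),
        intervalIntegral.integral_comp_sub_left (fun x : ℝ => x ^ (4*α)) 1]
      norm_num
      rw [integral_rpow (Or.inl (by linarith)), Real.one_rpow,
        Real.zero_rpow (by linarith)]
      norm_num
    have v3 : ∫ x in Ioo (0:ℝ) 1, x ^ (2*α) * (1-x) ^ (2*α)
        = Real.Gamma (2*α+1)^2 / Real.Gamma (4*α+2) := by
      have := cross_integral (a := 2*α) (by linarith)
      rw [this]
      ring_nf
    rw [MeasureTheory.integral_div]
    have k1 := MeasureTheory.integral_add (μ := volume.restrict (Ioo (0:ℝ) 1))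
      (i1.add i2) (i3.const_mul 2)
    simp only [Pi.add_apply] at k1
    rw [k1, MeasureTheory.integral_add i1 i2, MeasureTheory.integral_const_mul (2:ℝ) _,
      v1, v2, v3, hSdef]
    ring
  -- compute ‖K f‖
  have hKfnorm : ‖K f‖ = Real.sqrt (S / (4*α^2)) := by
    rw [Lp.norm_def, eLpNorm_congr_ae hKf,
      eLpNorm_eq_lintegral_rpow_enorm_toReal (by norm_num) (by norm_num)]
    simp only [ENNReal.toReal_ofNat]
    have e2 : ∫⁻ x, (‖((g x : ℝ) : ℂ)‖₊ : ℝ≥0∞) ^ (2:ℝ) ∂μ01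
        = ENNReal.ofReal (S / (4*α^2)) := by
      rw [← hgsq, ofReal_integral_eq_lintegral_ofReal hint
        ((ae_restrict_iff' measurableSet_Ioo).2 (ae_of_all _
          (fun x hx => sq_nonneg (g x))))]
      refine lintegral_congr_ae ?_
      filter_upwards [ae_restrict_mem measurableSet_Ioo] with x hx
      rw [show (‖((g x : ℝ) : ℂ)‖₊ : ℝ≥0∞) = ENNReal.ofReal (g x) by
          rw [← Real.enorm_eq_ofReal (hg_nonneg x hx)]; simp; rfl,
        ENNReal.ofReal_rpow_of_nonneg (hg_nonneg x hx) (by norm_num : (0:ℝ) ≤ 2),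
        Real.rpow_two]
    rw [show (∫⁻ x, ‖((g x : ℝ) : ℂ)‖ₑ ^ (2:ℝ) ∂μ01) = _ from e2]
    rw [← ENNReal.toReal_rpow, ENNReal.toReal_ofReal (by positivity),
      ← Real.sqrt_eq_rpow]
  have hsqrt : Real.sqrt (S / (4*α^2)) = (1/(2*α)) * Real.sqrt S := by
    rw [show S / (4*α^2) = (1/(2*α))^2 * S by
        rw [div_pow, one_pow, div_mul_eq_mul_div, one_mul, mul_pow]
        norm_num,
      Real.sqrt_mul (sq_nonneg _), Real.sqrt_sq (by positivity)]
  have hle := K.le_opNorm f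
  rw [hfnorm, mul_one, hKfnorm, hsqrt] at hle
  exact hle

theorem stmt15 (α : ℝ) (hα : 0 < α ∧ α < 1/2) (K : L2I →L[ℂ] L2I)
    (hK : IsIntegralOp (fun x y => ((|x - y| ^ (2 * α - 1) : ℝ) : ℂ)) K) :
    (1 / (2 * α)) * Real.sqrt (2 / (4 * α + 1) +
        2 * Real.Gamma (2 * α + 1) ^ 2 / Real.Gamma (4 * α + 2)) ≤ ‖K‖ ∧
      ‖K‖ ≤ 1 / α := by
  exact ⟨opNorm_ge hα.1 hα.2 K hK, opNorm_le hα.1 hα.2 K hK⟩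
end

section
/- Let K_α be the integral operator on L²(0,1) with kernel |x-y|^{2α-1}, 0 < α < 1/2. Then α‖K_α‖ → 1 as α → 0⁺ and ‖K_α‖ → 1 as α → 1/2⁻. -/
set_option maxHeartbeats 1000000

open MeasureTheory Filter Asymptotics Real Set

/-! ### Auxiliary lemmas -/

open scoped ENNReal NNReal ComplexConjugate

section Aux

lemma absRpowInt {p : ℝ} (hp : -1 < p) (a b : ℝ) :
    IntervalIntegrable (fun t : ℝ => |t| ^ p) volume a b := by
  have base : ∀ c : ℝ, 0 ≤ c → IntervalIntegrable (fun t : ℝ => |t| ^ p) volume 0 c := by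
    intro c hc
    apply (intervalIntegral.intervalIntegrable_rpow' (a := 0) (b := c) hp).congr
    have : Set.uIoc (0:ℝ) c ⊆ Set.Ioi 0 := by
      rw [Set.uIoc_of_le hc]; exact fun t ht => ht.1
    intro t ht
    show t ^ p = |t| ^ p
    rw [abs_of_pos (this ht)]
  have half : ∀ c : ℝ, IntervalIntegrable (fun t : ℝ => |t| ^ p) volume 0 c := by
    intro c
    rcases le_or_gt 0 c with hc | hc
    · exact base c hc
    · have := ((base (-c) (by linarith)).comp_sub_left 0).symm
      simp only [zero_sub, abs_neg, neg_zero, neg_neg] at this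
      exact this.symm
  exact ((half a).symm.trans (half b))

lemma rowII {p : ℝ} (hp : -1 < p) (x a b : ℝ) :
    IntervalIntegrable (fun y => |x - y| ^ p) volume a b := by
  have := (absRpowInt hp (x - a) (x - b)).comp_sub_left x
  simpa using this

lemma rowIntegrableOn {p : ℝ} (hp : -1 < p) (x : ℝ) :
    IntegrableOn (fun y => |x - y| ^ p) (Set.Ioo (0:ℝ) 1) volume := by
  have := (rowII hp x 0 1)
  rw [intervalIntegrable_iff_integrableOn_Ioc_of_le zero_le_one] at this
  exact this.mono_set Set.Ioo_subset_Ioc_self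

lemma rowIntegral {p : ℝ} (hp : -1 < p) {x : ℝ} (hx : x ∈ Set.Icc (0:ℝ) 1) :
    ∫ y in Set.Ioo (0:ℝ) 1, |x - y| ^ p = (x ^ (p+1) + (1-x) ^ (p+1)) / (p+1) := by
  rw [← MeasureTheory.integral_Ioc_eq_integral_Ioo,
    ← intervalIntegral.integral_of_le zero_le_one,
    ← intervalIntegral.integral_add_adjacent_intervals (b := x) (rowII hp x 0 x) (rowII hp x x 1)]
  have h1 : ∫ y in (0:ℝ)..x, |x - y| ^ p = x ^ (p+1) / (p+1) := by
    rw [intervalIntegral.integral_congr (g := fun y => (x - y) ^ p) ?_]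
    · rw [intervalIntegral.integral_comp_sub_left (fun t => t ^ p) x]
      simp only [sub_self, sub_zero]
      rw [integral_rpow (Or.inl hp)]
      rw [Real.zero_rpow (by linarith)]
      ring
    · intro y hy
      rw [Set.uIcc_of_le hx.1] at hy
      show |x - y| ^ p = (x - y) ^ p
      rw [abs_of_nonneg (by linarith [hy.2])]
  have h2 : ∫ y in x..(1:ℝ), |x - y| ^ p = (1-x) ^ (p+1) / (p+1) := by
    rw [intervalIntegral.integral_congr (g := fun y => (y - x) ^ p) ?_]
    · rw [intervalIntegral.integral_comp_sub_right (fun t => t ^ p) x]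
      simp only [sub_self]
      rw [integral_rpow (Or.inl hp)]
      rw [Real.zero_rpow (by linarith)]
      ring
    · intro y hy
      rw [Set.uIcc_of_le hx.2] at hy
      show |x - y| ^ p = (y - x) ^ p
      rw [abs_sub_comm, abs_of_nonneg (by linarith [hy.1])]
  rw [h1, h2]; ring

lemma rowBound {α : ℝ} (hα : α ∈ Set.Ioo (0:ℝ) (1/2)) {x : ℝ} (hx : x ∈ Set.Icc (0:ℝ) 1) :
    ∫ y in Set.Ioo (0:ℝ) 1, |x - y| ^ (2*α-1) ≤ (1-α)/α := by
  obtain ⟨hα0, hα2⟩ := hα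
  rw [rowIntegral (by linarith) hx]
  have h1 : x ^ (2*α-1+1) ≤ (2*α) * x + (1 - 2*α) := by
    have := Real.geom_mean_le_arith_mean2_weighted (w₁ := 2*α) (w₂ := 1-2*α) (p₁ := x) (p₂ := 1)
      (by linarith) (by linarith) hx.1 zero_le_one (by ring)
    rw [show 2*α-1+1 = 2*α by ring]
    simpa using this
  have h2 : (1-x) ^ (2*α-1+1) ≤ (2*α) * (1-x) + (1 - 2*α) := by
    have := Real.geom_mean_le_arith_mean2_weighted (w₁ := 2*α) (w₂ := 1-2*α) (p₁ := 1-x) (p₂ := 1)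
      (by linarith) (by linarith) (by linarith [hx.2]) zero_le_one (by ring)
    rw [show 2*α-1+1 = 2*α by ring]
    simpa using this
  rw [div_le_div_iff₀ (by linarith) hα0]
  nlinarith [h1, h2]

lemma integral_cplx_ofReal {X : Type*} [MeasurableSpace X] {μ : Measure X} (g : X → ℝ) :
    ∫ x, ((g x : ℝ) : ℂ) ∂μ = ((∫ x, g x ∂μ : ℝ) : ℂ) := integral_ofReal

lemma outerIntegral {α : ℝ} (hα : α ∈ Set.Ioo (0:ℝ) (1/2)) :
    ∫ x in Set.Ioo (0:ℝ) 1, (x ^ (2*α) + (1-x) ^ (2*α)) / (2*α) = 1/(α*(2*α+1)) := by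
  obtain ⟨hα0, hα2⟩ := hα
  have hq : (-1:ℝ) < 2*α := by linarith
  have hA : IntervalIntegrable (fun x : ℝ => x ^ (2*α)) volume 0 1 :=
    intervalIntegral.intervalIntegrable_rpow' hq
  have hB : IntervalIntegrable (fun x : ℝ => (1-x) ^ (2*α)) volume 0 1 := by
    have := (intervalIntegral.intervalIntegrable_rpow' hq (a := 0) (b := 1)).comp_sub_left 1
    simpa using this.symm
  have e1 : ∫ x in (0:ℝ)..1, x ^ (2*α) = 1/(2*α+1) := by
    rw [integral_rpow (Or.inl hq), Real.one_rpow, Real.zero_rpow (by linarith)]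
    ring
  have e2 : ∫ x in (0:ℝ)..1, (1-x) ^ (2*α) = 1/(2*α+1) := by
    rw [intervalIntegral.integral_comp_sub_left (fun t => t ^ (2*α)) 1]
    norm_num
    rw [integral_rpow (Or.inl hq), Real.one_rpow, Real.zero_rpow (by linarith)]
    ring
  rw [← MeasureTheory.integral_Ioc_eq_integral_Ioo, ← intervalIntegral.integral_of_le zero_le_one]
  rw [intervalIntegral.integral_div, intervalIntegral.integral_add hA hB, e1, e2]
  field_simp
  ring

lemma opNorm_upper {α : ℝ} (hα : α ∈ Set.Ioo (0:ℝ) (1/2)) (K : L2I →L[ℂ] L2I)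
    (hK : IsIntegralOp (fun x y => ((|x - y| ^ (2 * α - 1) : ℝ) : ℂ)) K) :
    ‖K‖ ≤ (1-α)/α := by
  obtain ⟨hα0, hα2⟩ := hα
  have hp : (-1:ℝ) < 2*α-1 := by linarith
  set C : ℝ := (1-α)/α with hCdef
  have hCpos : 0 < C := div_pos (by linarith) hα0
  have hC : 0 ≤ C := hCpos.le
  set kE : ℝ → ℝ → ℝ≥0∞ := fun x y => ENNReal.ofReal (|x - y| ^ (2*α-1)) with hkE
  have kE_meas : Measurable fun z : ℝ × ℝ => kE z.1 z.2 := by fun_prop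
  have hrow : ∀ x ∈ Set.Ioo (0:ℝ) 1, ∫⁻ y, kE x y ∂μ01 ≤ ENNReal.ofReal C := by
    intro x hx
    rw [← ofReal_integral_eq_lintegral_ofReal (rowIntegrableOn hp x)
      (Eventually.of_forall fun y => by positivity)]
    exact ENNReal.ofReal_le_ofReal (rowBound ⟨hα0, hα2⟩ (Set.mem_Icc_of_Ioo hx))
  have hcol : ∀ y ∈ Set.Ioo (0:ℝ) 1, ∫⁻ x, kE x y ∂μ01 ≤ ENNReal.ofReal C := by
    intro y hy
    have : ∀ x, kE x y = kE y x := fun x => by rw [hkE]; simp only [abs_sub_comm]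
    rw [lintegral_congr this]
    exact hrow y hy
  apply ContinuousLinearMap.opNorm_le_bound _ hC
  intro f
  set F : ℝ → ℂ := (f : ℝ → ℂ) with hF
  have hFm : AEStronglyMeasurable F μ01 := Lp.aestronglyMeasurable f
  have hF2 : AEMeasurable (fun y => (‖F y‖₊ : ℝ≥0∞) ^ (2:ℝ)) μ01 := hFm.enorm.pow_const _
  have step1 : ∀ᵐ x ∂μ01, (‖(K f : ℝ → ℂ) x‖₊ : ℝ≥0∞) ^ (2:ℝ)
      ≤ ENNReal.ofReal C * ∫⁻ y, kE x y * (‖F y‖₊ : ℝ≥0∞) ^ (2:ℝ) ∂μ01 := by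
    filter_upwards [hK f, ae_restrict_mem measurableSet_Ioo] with x hx1 hx2
    have e1 : (‖(K f : ℝ → ℂ) x‖₊ : ℝ≥0∞) ≤ ∫⁻ y, kE x y * ‖F y‖₊ ∂μ01 := by
      rw [hx1]
      refine le_trans (enorm_integral_le_lintegral_enorm _)
        (le_of_eq (lintegral_congr fun y => ?_))
      rw [enorm_mul, ← ofReal_norm, Complex.norm_real, Real.norm_eq_abs,
        abs_of_nonneg (by positivity)]
      rfl
    have e2 : ∫⁻ y, kE x y * ‖F y‖₊ ∂μ01
        ≤ (∫⁻ y, kE x y ∂μ01) ^ ((1:ℝ)/2)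
          * (∫⁻ y, kE x y * (‖F y‖₊ : ℝ≥0∞) ^ (2:ℝ) ∂μ01) ^ ((1:ℝ)/2) := by
      have hm1 : AEMeasurable (fun y => (kE x y) ^ ((1:ℝ)/2)) μ01 :=
        ((kE_meas.comp (measurable_prodMk_left (x := x))).pow_const _).aemeasurable
      have hm2 : AEMeasurable (fun y => (kE x y) ^ ((1:ℝ)/2) * ‖F y‖₊) μ01 :=
        hm1.mul hFm.enorm
      have CS := ENNReal.lintegral_mul_le_Lp_mul_Lq μ01
        Real.HolderConjugate.two_two hm1 hm2
      have lhs_eq : ∀ y, ((fun y => (kE x y) ^ ((1:ℝ)/2))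
          * fun y => (kE x y) ^ ((1:ℝ)/2) * ‖F y‖₊) y = kE x y * ‖F y‖₊ := by
        intro y
        have h : kE x y ^ ((1:ℝ)/2) * kE x y ^ ((1:ℝ)/2) = kE x y := by
          rw [← ENNReal.rpow_add_of_nonneg ((1:ℝ)/2) ((1:ℝ)/2) (by norm_num) (by norm_num)]
          norm_num
        simp only [Pi.mul_apply, ← mul_assoc, h]
      have r1 : ∀ y, ((kE x y) ^ ((1:ℝ)/2)) ^ (2:ℝ) = kE x y := fun y => by
        rw [← ENNReal.rpow_mul]; norm_num
      have r2 : ∀ y, ((kE x y) ^ ((1:ℝ)/2) * ‖F y‖₊) ^ (2:ℝ)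
          = kE x y * (‖F y‖₊ : ℝ≥0∞) ^ (2:ℝ) := fun y => by
        rw [ENNReal.mul_rpow_of_nonneg _ _ (by norm_num), ← ENNReal.rpow_mul]; norm_num
      calc ∫⁻ y, kE x y * ‖F y‖₊ ∂μ01
          = ∫⁻ y, ((fun y => (kE x y) ^ ((1:ℝ)/2))
            * fun y => (kE x y) ^ ((1:ℝ)/2) * ‖F y‖₊) y ∂μ01 :=
            (lintegral_congr lhs_eq).symm
        _ ≤ _ := CS
        _ = _ := by simp_rw [r1, r2]
    calc (‖(K f : ℝ → ℂ) x‖₊ : ℝ≥0∞) ^ (2:ℝ)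
        ≤ ((∫⁻ y, kE x y ∂μ01) ^ ((1:ℝ)/2)
          * (∫⁻ y, kE x y * (‖F y‖₊ : ℝ≥0∞) ^ (2:ℝ) ∂μ01) ^ ((1:ℝ)/2)) ^ (2:ℝ) :=
          ENNReal.rpow_le_rpow (e1.trans e2) (by norm_num)
      _ = (∫⁻ y, kE x y ∂μ01) * (∫⁻ y, kE x y * (‖F y‖₊ : ℝ≥0∞) ^ (2:ℝ) ∂μ01) := by
          rw [ENNReal.mul_rpow_of_nonneg _ _ (by norm_num), ← ENNReal.rpow_mul,
            ← ENNReal.rpow_mul]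
          norm_num
      _ ≤ ENNReal.ofReal C * ∫⁻ y, kE x y * (‖F y‖₊ : ℝ≥0∞) ^ (2:ℝ) ∂μ01 :=
          mul_le_mul_left (hrow x hx2) _
  have step2 : ∫⁻ x, (‖(K f : ℝ → ℂ) x‖₊ : ℝ≥0∞) ^ (2:ℝ) ∂μ01
      ≤ ENNReal.ofReal C * (ENNReal.ofReal C * ∫⁻ y, (‖F y‖₊ : ℝ≥0∞) ^ (2:ℝ) ∂μ01) := by
    have prodMeas : AEMeasurable (fun z : ℝ × ℝ => kE z.1 z.2 * (‖F z.2‖₊ : ℝ≥0∞) ^ (2:ℝ))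
        (μ01.prod μ01) :=
      kE_meas.aemeasurable.mul
        (hF2.comp_quasiMeasurePreserving Measure.quasiMeasurePreserving_snd)
    calc ∫⁻ x, (‖(K f : ℝ → ℂ) x‖₊ : ℝ≥0∞) ^ (2:ℝ) ∂μ01
        ≤ ∫⁻ x, ENNReal.ofReal C * ∫⁻ y, kE x y * (‖F y‖₊ : ℝ≥0∞) ^ (2:ℝ) ∂μ01 ∂μ01 :=
          lintegral_mono_ae step1
      _ = ENNReal.ofReal C * ∫⁻ x, ∫⁻ y, kE x y * (‖F y‖₊ : ℝ≥0∞) ^ (2:ℝ) ∂μ01 ∂μ01 :=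
          lintegral_const_mul' _ _ ENNReal.ofReal_ne_top
      _ = ENNReal.ofReal C * ∫⁻ y, ∫⁻ x, kE x y * (‖F y‖₊ : ℝ≥0∞) ^ (2:ℝ) ∂μ01 ∂μ01 := by
          rw [lintegral_lintegral_swap prodMeas]
      _ = ENNReal.ofReal C * ∫⁻ y, (∫⁻ x, kE x y ∂μ01) * (‖F y‖₊ : ℝ≥0∞) ^ (2:ℝ) ∂μ01 := by
          congr 1
          refine lintegral_congr fun y => ?_
          exact lintegral_mul_const'' _ (kE_meas.comp measurable_prodMk_right).aemeasurable
      _ ≤ ENNReal.ofReal C * ∫⁻ y, ENNReal.ofReal C * (‖F y‖₊ : ℝ≥0∞) ^ (2:ℝ) ∂μ01 := by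
          refine mul_le_mul_right (lintegral_mono_ae ?_) _
          filter_upwards [ae_restrict_mem measurableSet_Ioo] with y hy
          exact mul_le_mul_left (hcol y hy) _
      _ = ENNReal.ofReal C * (ENNReal.ofReal C * ∫⁻ y, (‖F y‖₊ : ℝ≥0∞) ^ (2:ℝ) ∂μ01) := by
          rw [lintegral_const_mul' _ _ ENNReal.ofReal_ne_top]
  have he : eLpNorm (K f : ℝ → ℂ) 2 μ01 ≤ ENNReal.ofReal C * eLpNorm F 2 μ01 := by
    rw [eLpNorm_eq_lintegral_rpow_enorm_toReal (two_ne_zero) ENNReal.ofNat_ne_top,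
      eLpNorm_eq_lintegral_rpow_enorm_toReal (two_ne_zero) ENNReal.ofNat_ne_top]
    simp only [ENNReal.toReal_ofNat]
    calc (∫⁻ x, (‖(K f : ℝ → ℂ) x‖₊ : ℝ≥0∞) ^ (2:ℝ) ∂μ01) ^ ((1:ℝ)/2)
        ≤ (ENNReal.ofReal C * (ENNReal.ofReal C
            * ∫⁻ y, (‖F y‖₊ : ℝ≥0∞) ^ (2:ℝ) ∂μ01)) ^ ((1:ℝ)/2) :=
          ENNReal.rpow_le_rpow step2 (by norm_num)
      _ = ENNReal.ofReal C * (∫⁻ y, (‖F y‖₊ : ℝ≥0∞) ^ (2:ℝ) ∂μ01) ^ ((1:ℝ)/2) := by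
          rw [← mul_assoc, ENNReal.mul_rpow_of_nonneg _ _ (by norm_num)]
          congr 1
          rw [show ENNReal.ofReal C * ENNReal.ofReal C = ENNReal.ofReal C ^ ((2:ℕ):ℝ) by
            rw [ENNReal.rpow_natCast]; ring, ← ENNReal.rpow_mul]
          norm_num
  rw [Lp.norm_def, Lp.norm_def]
  calc (eLpNorm (K f : ℝ → ℂ) 2 μ01).toReal
      ≤ (ENNReal.ofReal C * eLpNorm F 2 μ01).toReal := by
        apply ENNReal.toReal_mono _ he
        exact ENNReal.mul_ne_top ENNReal.ofReal_ne_top (Lp.eLpNorm_ne_top f)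
    _ = C * (eLpNorm (f : ℝ → ℂ) 2 μ01).toReal := by
        rw [ENNReal.toReal_mul, ENNReal.toReal_ofReal hC]

lemma opNorm_lower {α : ℝ} (hα : α ∈ Set.Ioo (0:ℝ) (1/2)) (K : L2I →L[ℂ] L2I)
    (hK : IsIntegralOp (fun x y => ((|x - y| ^ (2 * α - 1) : ℝ) : ℂ)) K) :
    1/(α*(2*α+1)) ≤ ‖K‖ := by
  obtain ⟨hα0, hα2⟩ := hα
  have hp : (-1:ℝ) < 2*α-1 := by linarith
  have hμs : μ01 (Set.Ioo (0:ℝ) 1) ≠ ∞ := by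
    rw [Measure.restrict_apply measurableSet_Ioo]
    simp
  set f : L2I := indicatorConstLp 2 measurableSet_Ioo hμs (1:ℂ) with hfdef
  have hf1 : (f : ℝ → ℂ) =ᵐ[μ01] fun _ => 1 := by
    filter_upwards [indicatorConstLp_coeFn (p := 2) (hs := measurableSet_Ioo) (hμs := hμs)
      (c := (1:ℂ)), ae_restrict_mem measurableSet_Ioo] with x hx hxs
    rw [hfdef] at *
    rw [hx, Set.indicator_of_mem hxs]
  have hnf : ‖f‖ = 1 := by
    rw [hfdef, norm_indicatorConstLp two_ne_zero ENNReal.ofNat_ne_top]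
    rw [measureReal_restrict_apply measurableSet_Ioo]
    simp
  have hinner : (inner ℂ f (K f) : ℂ) = ((1/(α*(2*α+1)) : ℝ) : ℂ) := by
    rw [MeasureTheory.L2.inner_def]
    have key : ∀ᵐ x ∂μ01, (inner ℂ ((f : ℝ → ℂ) x) ((K f : ℝ → ℂ) x) : ℂ)
        = (((x ^ (2*α) + (1-x) ^ (2*α)) / (2*α) : ℝ) : ℂ) := by
      filter_upwards [hf1, hK f, ae_restrict_mem measurableSet_Ioo] with x hx1 hx2 hx3
      rw [RCLike.inner_apply, hx1, map_one, mul_one, hx2]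
      have : ∫ y in Set.Ioo (0:ℝ) 1, ((|x - y| ^ (2*α-1) : ℝ) : ℂ) * (f : ℝ → ℂ) y
          = ∫ y in Set.Ioo (0:ℝ) 1, ((|x - y| ^ (2*α-1) : ℝ) : ℂ) := by
        apply integral_congr_ae
        filter_upwards [hf1] with y hy
        rw [hy, mul_one]
      rw [this, integral_cplx_ofReal (fun y => |x - y| ^ (2*α-1)),
        rowIntegral hp (Set.mem_Icc_of_Ioo hx3)]
      norm_num
    rw [integral_congr_ae key,
      integral_cplx_ofReal (fun x => (x ^ (2*α) + (1-x) ^ (2*α)) / (2*α)),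
      outerIntegral ⟨hα0, hα2⟩]
  have h1 : ‖(inner ℂ f (K f) : ℂ)‖ ≤ ‖f‖ * ‖K f‖ := norm_inner_le_norm _ _
  rw [hinner, hnf, one_mul] at h1
  have h2 : ‖K f‖ ≤ ‖K‖ := by
    calc ‖K f‖ ≤ ‖K‖ * ‖f‖ := K.le_opNorm f
      _ = ‖K‖ := by rw [hnf, mul_one]
  refine le_trans (le_trans ?_ h1) h2
  rw [Complex.norm_real]
  exact le_abs_self _

end Aux

theorem stmt17 (N : ℝ → ℝ)
    (hN : ∀ α ∈ Set.Ioo (0 : ℝ) (1/2), ∃ K : L2I →L[ℂ] L2I,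
      IsIntegralOp (fun x y => ((|x - y| ^ (2 * α - 1) : ℝ) : ℂ)) K ∧ N α = ‖K‖) :
    Tendsto (fun α => α * N α) (nhdsWithin 0 (Set.Ioo (0 : ℝ) (1/2))) (nhds 1) ∧
    Tendsto N (nhdsWithin (1/2) (Set.Ioo (0 : ℝ) (1/2))) (nhds 1) := by
  have bounds : ∀ α ∈ Set.Ioo (0:ℝ) (1/2), 1/(α*(2*α+1)) ≤ N α ∧ N α ≤ (1-α)/α := by
    intro α hα
    obtain ⟨K, hK, hNK⟩ := hN α hα
    rw [hNK]
    exact ⟨opNorm_lower hα K hK, opNorm_upper hα K hK⟩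
  constructor
  · have hg : Tendsto (fun α : ℝ => 1/(2*α+1)) (nhdsWithin 0 (Set.Ioo (0:ℝ) (1/2))) (nhds 1) := by
      have hden : Tendsto (fun α : ℝ => 2*α+1) (nhds 0) (nhds 1) := by
        have hc : Continuous fun α : ℝ => 2*α+1 :=
          (continuous_const.mul continuous_id).add continuous_const
        have h2 := hc.tendsto 0
        norm_num at h2
        exact h2
      have := (tendsto_const_nhds (x := (1:ℝ))).div hden one_ne_zero
      simp only [div_one] at this
      exact this.mono_left nhdsWithin_le_nhds
    have hh : Tendsto (fun α : ℝ => 1 - α) (nhdsWithin 0 (Set.Ioo (0:ℝ) (1/2))) (nhds 1) := by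
      have hc : Continuous fun α : ℝ => 1 - α := continuous_const.sub continuous_id
      have h2 := hc.tendsto 0
      norm_num at h2
      exact h2.mono_left nhdsWithin_le_nhds
    refine tendsto_of_tendsto_of_tendsto_of_le_of_le' hg hh ?_ ?_
    · filter_upwards [eventually_mem_nhdsWithin] with α hα
      obtain ⟨hα0, hα2⟩ := hα
      calc 1/(2*α+1) = α * (1/(α*(2*α+1))) := by
            field_simp
        _ ≤ α * N α := mul_le_mul_of_nonneg_left (bounds α ⟨hα0, hα2⟩).1 hα0.le
    · filter_upwards [eventually_mem_nhdsWithin] with α hα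
      obtain ⟨hα0, hα2⟩ := hα
      calc α * N α ≤ α * ((1-α)/α) := mul_le_mul_of_nonneg_left (bounds α ⟨hα0, hα2⟩).2 hα0.le
        _ = 1 - α := by field_simp
  · have hg : Tendsto (fun α : ℝ => 1/(α*(2*α+1)))
        (nhdsWithin (1/2) (Set.Ioo (0:ℝ) (1/2))) (nhds 1) := by
      have hden : Tendsto (fun α : ℝ => α*(2*α+1)) (nhds (1/2)) (nhds 1) := by
        have hc : Continuous fun α : ℝ => α*(2*α+1) :=
          continuous_id.mul ((continuous_const.mul continuous_id).add continuous_const)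
        have h2 := hc.tendsto (1/2)
        norm_num at h2
        exact h2
      have := (tendsto_const_nhds (x := (1:ℝ))).div hden one_ne_zero
      simp only [div_one] at this
      exact this.mono_left nhdsWithin_le_nhds
    have hh : Tendsto (fun α : ℝ => (1-α)/α)
        (nhdsWithin (1/2) (Set.Ioo (0:ℝ) (1/2))) (nhds 1) := by
      have hnum : Tendsto (fun α : ℝ => 1 - α) (nhds ((1:ℝ)/2)) (nhds (1/2)) := by
        have hc : Continuous fun α : ℝ => 1 - α := continuous_const.sub continuous_id
        have h2 := hc.tendsto (1/2)
        norm_num at h2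
        exact h2
      have hden : Tendsto (fun α : ℝ => α) (nhds ((1:ℝ)/2)) (nhds (1/2)) := continuous_id.tendsto _
      have h3 := hnum.div hden (by norm_num)
      norm_num at h3
      exact h3.mono_left nhdsWithin_le_nhds
    refine tendsto_of_tendsto_of_tendsto_of_le_of_le' hg hh ?_ ?_
    · filter_upwards [eventually_mem_nhdsWithin] with α hα
      exact (bounds α hα).1
    · filter_upwards [eventually_mem_nhdsWithin] with α hα
      exact (bounds α hα).2
end
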